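/- arXiv:2406.17874 — 5 statements merged into one kernel-verified Lean document; each statement's English description precedes it below -/
import Mathlib

section
/- Under the standing hypotheses, the complex number μ_j = i·g_{x_j}(0,1) is real for every j with 1 ≤ j ≤ d. -/
open MeasureTheory ProbabilityTheory Complex Filter Topology Metric

/-- The characteristic function of an `ℝ^d`-valued random variable `Y`:
`φ_Y(x) = E[exp(i⟨Y, x⟩)]`. -/
noncomputable def charFn {Ω : Type*} [MeasureSpace Ω] {d : ℕ}
    (Y : Ω → Fin d → ℝ) (x : Fin d → ℝ) : ℂ :=
  ∫ ω, Complex.exp (Complex.I * (∑ j, Y ω j * x j : ℝ))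

/-- The second partial derivative of `g` (as a function on `ℝ^d × ℂ`),
in directions `v` then `w`. -/
noncomputable def pd2 {d : ℕ} (g : (Fin d → ℝ) × ℂ → ℂ)
    (p v w : (Fin d → ℝ) × ℂ) : ℂ :=
  fderiv ℝ (fderiv ℝ g) p v w

lemma charFn_neg {Ω : Type*} [MeasureSpace Ω] {d : ℕ} (Y : Ω → Fin d → ℝ) (x : Fin d → ℝ) :
    charFn Y (-x) = starRingEnd ℂ (charFn Y x) := by
  unfold charFn
  rw [← integral_conj]
  congr 1
  ext ω
  rw [← Complex.exp_conj]
  congr 1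
  have h : (∑ k, Y ω k * (-x) k : ℝ) = -(∑ k, Y ω k * x k) := by simp [mul_neg]
  rw [h, map_mul, Complex.conj_I, Complex.conj_ofReal]
  push_cast
  ring

lemma g_symm {Ω : Type*} [MeasureSpace Ω] {d : ℕ}
    (Y : ℕ → Ω → Fin d → ℝ)
    (U : Set ((Fin d → ℝ) × ℂ)) (g : (Fin d → ℝ) × ℂ → ℂ)
    (hg_ne : ∀ x z, (x, z) ∈ U → ‖z‖ < 1 → g (x, z) ≠ 0)
    (hg_sum : ∀ x z, (x, z) ∈ U → ‖z‖ < 1 →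
      HasSum (fun n : ℕ => charFn (Y n) x * z ^ n) (1 / g (x, z)))
    (x : Fin d → ℝ) (z : ℂ) (h1 : (x, z) ∈ U) (h2 : (-x, z) ∈ U)
    (hz : ‖z‖ < 1) (hzr : starRingEnd ℂ z = z) :
    g (-x, z) = starRingEnd ℂ (g (x, z)) := by
  have hA := hg_sum x z h1 hz
  have hB := hg_sum (-x) z h2 hz
  have hC : HasSum (fun n : ℕ => starRingEnd ℂ (charFn (Y n) x * z ^ n))
      (starRingEnd ℂ (1 / g (x, z))) := hA.map (starRingEnd ℂ) continuous_conj
  have hEq : (fun n : ℕ => starRingEnd ℂ (charFn (Y n) x * z ^ n)) =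
      fun n : ℕ => charFn (Y n) (-x) * z ^ n := by
    funext n
    rw [charFn_neg, map_mul, map_pow, hzr]
  rw [hEq] at hC
  have := hB.unique hC
  have hne := hg_ne x z h1 hz
  have hne' := hg_ne (-x) z h2 hz
  have hcne : starRingEnd ℂ (g (x, z)) ≠ 0 := by simpa using hne
  rw [map_div₀, map_one] at this
  field_simp at this
  exact this.symm

/-- Under the standing hypotheses, `μ_j = i g_{x_j}(0,1)` is real for every `j`. -/
theorem stmt3 {d : ℕ} (hd : 0 < d)
    {Ω : Type*} [MeasureSpace Ω] [IsProbabilityMeasure (ℙ : Measure Ω)]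
    (Y : ℕ → Ω → Fin d → ℝ) (hYmeas : ∀ n, Measurable (Y n))
    -- `U` is an open neighborhood of `{0} × {z : |z| ≤ 1}` in `ℝ^d × ℂ`
    (U : Set ((Fin d → ℝ) × ℂ)) (hUopen : IsOpen U)
    (hUnhd : ∀ z : ℂ, ‖z‖ ≤ 1 → ((0 : Fin d → ℝ), z) ∈ U)
    (g : (Fin d → ℝ) × ℂ → ℂ)
    -- (i) `g(x, z)` is holomorphic in `z` for each fixed `x`
    (hg_holo : ∀ x : Fin d → ℝ, DifferentiableOn ℂ (fun z => g (x, z)) {z | (x, z) ∈ U})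
    -- (ii) `g` is twice differentiable on `U`
    (hg_diff : DifferentiableOn ℝ g U)
    (hg_diff2 : DifferentiableOn ℝ (fderiv ℝ g) U)
    -- (iii) `∑ φ_{Y_n}(x) z^n = 1/g(x,z)` for `(x,z) ∈ U`, `|z| < 1`
    -- (in particular `g` is nonvanishing there)
    (hg_ne : ∀ x z, (x, z) ∈ U → ‖z‖ < 1 → g (x, z) ≠ 0)
    (hg_sum : ∀ x z, (x, z) ∈ U → ‖z‖ < 1 →
      HasSum (fun n : ℕ => charFn (Y n) x * z ^ n) (1 / g (x, z))) :
    ∀ j : Fin d, (Complex.I * fderiv ℝ g (0, 1) (Pi.single j 1, 0)).im = 0 := by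
  intro j
  set ej : Fin d → ℝ := Pi.single j 1 with hej
  -- real part of the directional derivative vanishes for r < 1
  have key : ∀ r : ℝ, r ∈ Set.Ioo (-1 : ℝ) 1 →
      (fderiv ℝ g (0, (r : ℂ)) (ej, 0)).re = 0 := by
    intro r hr
    have hrabs : |r| < 1 := abs_lt.mpr ⟨hr.1, hr.2⟩
    have hnorm : ‖(r : ℂ)‖ < 1 := by simpa [Complex.norm_real] using hrabs
    have hrU : ((0 : Fin d → ℝ), (r : ℂ)) ∈ U := hUnhd _ hnorm.le
    have hdiff : DifferentiableAt ℝ g (0, (r : ℂ)) :=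
      hg_diff.differentiableAt (hUopen.mem_nhds hrU)
    set L := fderiv ℝ g (0, (r : ℂ)) with hL
    -- derivative of g along lines t ↦ (t • v, r)
    have hFv : ∀ v : Fin d → ℝ,
        HasDerivAt (fun t : ℝ => g (t • v, (r : ℂ))) (L (v, 0)) 0 := by
      intro v
      have hcurve : HasDerivAt (fun t : ℝ => ((t • v, (r : ℂ)) : (Fin d → ℝ) × ℂ))
          ((v, 0)) 0 := by
        have h1 : HasDerivAt (fun t : ℝ => t • v) ((1 : ℝ) • v) 0 :=
          (hasDerivAt_id (0 : ℝ)).smul_const v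
        have h2 : HasDerivAt (fun _ : ℝ => (r : ℂ)) 0 0 := hasDerivAt_const _ _
        simpa using h1.prodMk h2
      have h0 : (fun t : ℝ => ((t • v, (r : ℂ)) : (Fin d → ℝ) × ℂ)) 0
          = ((0 : Fin d → ℝ), (r : ℂ)) := by simp
      have hg' : HasFDerivAt g L ((fun t : ℝ => ((t • v, (r : ℂ)) : (Fin d → ℝ) × ℂ)) 0) := by
        rw [h0]; exact hdiff.hasFDerivAt
      have hcomp := HasFDerivAt.comp_hasDerivAt 0 hg' hcurve
      exact hcomp
    have hplus := hFv ej
    have hminus := hFv (-ej)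
    have hmneg : L (-ej, 0) = -L (ej, 0) := by
      have hpt : ((-ej, (0 : ℂ)) : (Fin d → ℝ) × ℂ) = -(ej, (0 : ℂ)) := by
        simp [Prod.ext_iff]
      rw [hpt, map_neg]
    rw [hmneg] at hminus
    have hconj : HasDerivAt (fun t : ℝ => starRingEnd ℂ (g (t • ej, (r : ℂ))))
        (starRingEnd ℂ (L (ej, 0))) 0 := hplus.star
    have hm1 : {t : ℝ | ((t • ej, (r : ℂ)) : (Fin d → ℝ) × ℂ) ∈ U} ∈ 𝓝 (0 : ℝ) := by
      have hc1 : Continuous fun t : ℝ => ((t • ej, (r : ℂ)) : (Fin d → ℝ) × ℂ) :=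
        (continuous_id.smul continuous_const).prodMk continuous_const
      have := hc1.continuousAt.preimage_mem_nhds (x := (0 : ℝ))
        (by simpa using hUopen.mem_nhds hrU)
      exact this
    have hm2 : {t : ℝ | ((t • (-ej), (r : ℂ)) : (Fin d → ℝ) × ℂ) ∈ U} ∈ 𝓝 (0 : ℝ) := by
      have hc2 : Continuous fun t : ℝ => ((t • (-ej), (r : ℂ)) : (Fin d → ℝ) × ℂ) :=
        (continuous_id.smul continuous_const).prodMk continuous_const
      have := hc2.continuousAt.preimage_mem_nhds (x := (0 : ℝ))
        (by simpa using hUopen.mem_nhds hrU)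
      exact this
    have hev : (fun t : ℝ => g (t • (-ej), (r : ℂ))) =ᶠ[𝓝 (0 : ℝ)]
        (fun t : ℝ => starRingEnd ℂ (g (t • ej, (r : ℂ)))) := by
      filter_upwards [hm1, hm2] with t h1 h2
      have h2' : ((-(t • ej) : Fin d → ℝ), (r : ℂ)) ∈ U := by
        rwa [smul_neg] at h2
      have := g_symm Y U g hg_ne hg_sum (t • ej) (r : ℂ) h1 h2' hnorm
        (Complex.conj_ofReal r)
      rw [smul_neg]
      exact this
    have hminus' : HasDerivAt (fun t : ℝ => starRingEnd ℂ (g (t • ej, (r : ℂ))))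
        (-L (ej, 0)) 0 := hminus.congr_of_eventuallyEq hev.symm
    have huniq : starRingEnd ℂ (L (ej, 0)) = -L (ej, 0) := hconj.unique hminus'
    have hre := congrArg Complex.re huniq
    simp at hre
    linarith
  -- pass to the limit r → 1⁻
  have h1U : ((0 : Fin d → ℝ), (1 : ℂ)) ∈ U := hUnhd 1 (by simp)
  have hcts : ContinuousAt (fun s : ℝ => (fderiv ℝ g (0, (s : ℂ)) (ej, 0)).re) 1 := by
    have h1 : ContinuousAt (fderiv ℝ g) ((0 : Fin d → ℝ), (1 : ℂ)) :=
      (hg_diff2.differentiableAt (hUopen.mem_nhds h1U)).continuousAt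
    have h2 : ContinuousAt (fun s : ℝ => (((0 : Fin d → ℝ), (s : ℂ)) : (Fin d → ℝ) × ℂ)) 1 :=
      (continuous_const.prodMk Complex.continuous_ofReal).continuousAt
    have h1' : ContinuousAt (fderiv ℝ g) ((0 : Fin d → ℝ), ((1 : ℝ) : ℂ)) := by
      rw [Complex.ofReal_one]; exact h1
    have h3 : ContinuousAt (fun s : ℝ => fderiv ℝ g (0, (s : ℂ))) 1 :=
      ContinuousAt.comp (g := fderiv ℝ g)
        (f := fun s : ℝ => (((0 : Fin d → ℝ), (s : ℂ)) : (Fin d → ℝ) × ℂ)) h1' h2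
    exact Complex.continuous_re.continuousAt.comp
      (((ContinuousLinearMap.apply ℝ ℂ ((ej, (0 : ℂ)))).continuous.continuousAt).comp h3)
  have htend1 : Tendsto (fun s : ℝ => (fderiv ℝ g (0, (s : ℂ)) (ej, 0)).re)
      (𝓝[<] (1 : ℝ)) (𝓝 ((fderiv ℝ g (0, ((1 : ℝ) : ℂ)) (ej, 0)).re)) :=
    hcts.tendsto.mono_left nhdsWithin_le_nhds
  have htend2 : Tendsto (fun s : ℝ => (fderiv ℝ g (0, (s : ℂ)) (ej, 0)).re)
      (𝓝[<] (1 : ℝ)) (𝓝 0) := by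
    have hev : (fun s : ℝ => (fderiv ℝ g (0, (s : ℂ)) (ej, 0)).re) =ᶠ[𝓝[<] (1 : ℝ)]
        (fun _ => 0) := by
      filter_upwards [Ioo_mem_nhdsLT_of_mem (show (1 : ℝ) ∈ Set.Ioc (0 : ℝ) 1 by norm_num)]
        with s hs
      exact key s ⟨by linarith [hs.1], hs.2⟩
    exact (tendsto_congr' hev).mpr tendsto_const_nhds
  have hre : (fderiv ℝ g (0, ((1 : ℝ) : ℂ)) (ej, 0)).re = 0 :=
    tendsto_nhds_unique htend1 htend2
  rw [show ((1 : ℝ) : ℂ) = 1 by norm_num] at hre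
  simp [Complex.mul_im, hre]
end

section
/- Under the standing hypotheses, there exist an open neighborhood V₁ of 0 in ℝ^d, an open neighborhood V₂ ⊆ ℂ of {z : |z| ≤ 1} with V₁ × V₂ ⊆ U, and a twice differentiable function b : V₁ → ℂ with b(0) = 1 and b nonvanishing on V₁, such that for all (x,z) ∈ V₁ × V₂ one has g(x,z) = 0 if and only if z = b(x). -/
open MeasureTheory ProbabilityTheory Complex Filter Topology Metric

open ContinuousLinearMap in
/-- The invertible derivative of `p ↦ (p.1, g p)` built from the partial data. -/
noncomputable def implEquiv {d : ℕ} (Dg : ((Fin d → ℝ) × ℂ) →L[ℝ] ℂ) (c : ℂ) (hc : c ≠ 0)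
    (hdec : ∀ u w, Dg (u, w) = Dg (u, 0) + w * c) :
    ((Fin d → ℝ) × ℂ) ≃L[ℝ] ((Fin d → ℝ) × ℂ) :=
  ContinuousLinearEquiv.equivOfInverse
    ((fst ℝ (Fin d → ℝ) ℂ).prod Dg)
    ((fst ℝ (Fin d → ℝ) ℂ).prod (c⁻¹ • ((snd ℝ (Fin d → ℝ) ℂ) - Dg.comp ((fst ℝ (Fin d → ℝ) ℂ).prod 0))))
    (by
      rintro ⟨u, w⟩
      refine Prod.ext (by simp) ?_
      simp only [prod_apply, coe_fst', coe_snd', smul_apply, sub_apply, coe_comp',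
        Function.comp_apply, zero_apply, smul_eq_mul]
      rw [hdec u w]
      field_simp
      ring)
    (by
      rintro ⟨u, v⟩
      refine Prod.ext (by simp) ?_
      simp only [prod_apply, coe_fst', coe_snd', smul_apply, sub_apply, coe_comp',
        Function.comp_apply, zero_apply, smul_eq_mul]
      rw [hdec u (c⁻¹ * (v - Dg (u, 0)))]
      field_simp
      ring)

lemma implEquiv_coe {d : ℕ} (Dg : ((Fin d → ℝ) × ℂ) →L[ℝ] ℂ) (c : ℂ) (hc : c ≠ 0)
    (hdec : ∀ u w, Dg (u, w) = Dg (u, 0) + w * c) :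
    (implEquiv Dg c hc hdec : ((Fin d → ℝ) × ℂ) →L[ℝ] ((Fin d → ℝ) × ℂ))
      = (ContinuousLinearMap.fst ℝ (Fin d → ℝ) ℂ).prod Dg := rfl

lemma implEquiv_symm_apply {d : ℕ} (Dg : ((Fin d → ℝ) × ℂ) →L[ℝ] ℂ) (c : ℂ) (hc : c ≠ 0)
    (hdec : ∀ u w, Dg (u, w) = Dg (u, 0) + w * c) (p : (Fin d → ℝ) × ℂ) :
    (implEquiv Dg c hc hdec).symm p = (p.1, c⁻¹ * (p.2 - Dg (p.1, 0))) := rfl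

set_option maxHeartbeats 1600000 in
/-- Under the standing hypotheses, the implicit function theorem produces neighborhoods
`V₁ ∋ 0`, `V₂ ⊇ {|z| ≤ 1}` with `V₁ × V₂ ⊆ U` and a twice differentiable nonvanishing
`b : V₁ → ℂ` with `b(0) = 1` such that on `V₁ × V₂`, `g(x,z) = 0 ↔ z = b(x)`. -/
theorem stmt7 {d : ℕ} (hd : 0 < d)
    {Ω : Type*} [MeasureSpace Ω] [IsProbabilityMeasure (ℙ : Measure Ω)]
    (Y : ℕ → Ω → Fin d → ℝ) (hYmeas : ∀ n, Measurable (Y n))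
    -- `U` is an open neighborhood of `{0} × {z : |z| ≤ 1}` in `ℝ^d × ℂ`
    (U : Set ((Fin d → ℝ) × ℂ)) (hUopen : IsOpen U)
    (hUnhd : ∀ z : ℂ, ‖z‖ ≤ 1 → ((0 : Fin d → ℝ), z) ∈ U)
    (g : (Fin d → ℝ) × ℂ → ℂ)
    -- (i) `g(x, z)` is holomorphic in `z` for each fixed `x`
    (hg_holo : ∀ x : Fin d → ℝ, DifferentiableOn ℂ (fun z => g (x, z)) {z | (x, z) ∈ U})
    -- (ii) `g` is twice differentiable on `U`
    (hg_diff : DifferentiableOn ℝ g U)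
    (hg_diff2 : DifferentiableOn ℝ (fderiv ℝ g) U)
    -- (iii) `∑ φ_{Y_n}(x) z^n = 1/g(x,z)` for `(x,z) ∈ U`, `|z| < 1`
    -- (in particular `g` is nonvanishing there)
    (hg_ne : ∀ x z, (x, z) ∈ U → ‖z‖ < 1 → g (x, z) ≠ 0)
    (hg_sum : ∀ x z, (x, z) ∈ U → ‖z‖ < 1 →
      HasSum (fun n : ℕ => charFn (Y n) x * z ^ n) (1 / g (x, z))) :
    ∃ (V₁ : Set (Fin d → ℝ)) (V₂ : Set ℂ) (b : (Fin d → ℝ) → ℂ),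
      IsOpen V₁ ∧ (0 : Fin d → ℝ) ∈ V₁ ∧
      IsOpen V₂ ∧ (∀ z : ℂ, ‖z‖ ≤ 1 → z ∈ V₂) ∧
      V₁ ×ˢ V₂ ⊆ U ∧
      DifferentiableOn ℝ b V₁ ∧ DifferentiableOn ℝ (fderiv ℝ b) V₁ ∧
      b 0 = 1 ∧ (∀ x ∈ V₁, b x ≠ 0) ∧
      ∀ x ∈ V₁, ∀ z ∈ V₂, (g (x, z) = 0 ↔ z = b x) := by
  classical
  -- the slice `V₀ = {z | (0, z) ∈ U}`
  set V₀ : Set ℂ := {z | ((0 : Fin d → ℝ), z) ∈ U} with hV₀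
  have hV₀open : IsOpen V₀ := hUopen.preimage (continuous_const.prodMk continuous_id)
  have hballV₀ : closedBall (0 : ℂ) 1 ⊆ V₀ := fun z hz => hUnhd z (mem_closedBall_zero_iff.mp hz)
  obtain ⟨δ, hδpos, hδsub⟩ : ∃ δ > 0, thickening δ (closedBall (0 : ℂ) 1) ⊆ V₀ :=
    (isCompact_closedBall 0 1).exists_thickening_subset_open hV₀open hballV₀
  have hδU : ∀ z : ℂ, ‖z‖ < 1 + δ → ((0 : Fin d → ℝ), z) ∈ U := by
    intro z hz
    refine hδsub ?_
    rcases le_or_gt ‖z‖ 1 with h | h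
    · exact self_subset_thickening hδpos _ (mem_closedBall_zero_iff.mpr h)
    · rw [mem_thickening_iff]
      have hz1 : (0 : ℝ) < ‖z‖ := lt_trans one_pos h
      refine ⟨(‖z‖⁻¹ : ℝ) • z, ?_, ?_⟩
      · rw [mem_closedBall_zero_iff, norm_smul, Real.norm_eq_abs,
          _root_.abs_of_pos (inv_pos.mpr hz1), inv_mul_cancel₀ (ne_of_gt hz1)]
      · have : z - (‖z‖⁻¹ : ℝ) • z = ((1 : ℝ) - ‖z‖⁻¹) • z := by
          rw [sub_smul, one_smul]
        rw [dist_eq_norm, this, norm_smul]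
        have h1 : (0 : ℝ) ≤ 1 - ‖z‖⁻¹ := by
          have : ‖z‖⁻¹ ≤ 1 := by
            rw [inv_le_one_iff₀]; right; exact le_of_lt h
          linarith
        rw [Real.norm_eq_abs, _root_.abs_of_nonneg h1, sub_mul, one_mul,
          inv_mul_cancel₀ (ne_of_gt hz1)]
        linarith
  -- `g (0, z) = 1 - z` on the ball of radius `1 + δ`
  have hcharFn0 : ∀ n, charFn (Y n) (0 : Fin d → ℝ) = 1 := by
    intro n
    have : ∀ ω, Complex.exp (Complex.I * ((∑ j, Y n ω j * (0 : Fin d → ℝ) j : ℝ) : ℂ)) = 1 := by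
      intro ω; simp
    simp only [charFn, this, integral_const, probReal_univ, one_smul]
  have hg0_ball : ∀ z : ℂ, ‖z‖ < 1 → g (0, z) = 1 - z := by
    intro z hz
    have hU' := hUnhd z (le_of_lt hz)
    have hs := hg_sum 0 z hU' hz
    simp only [hcharFn0, one_mul] at hs
    have hgeo : HasSum (fun n : ℕ => z ^ n) (1 - z)⁻¹ := hasSum_geometric_of_norm_lt_one hz
    have heq : 1 / g (0, z) = (1 - z)⁻¹ := hs.unique hgeo
    have hz1 : (1 : ℂ) - z ≠ 0 := by
      intro h
      have : z = 1 := by linear_combination -h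
      rw [this] at hz; simp at hz
    have hgne : g (0, z) ≠ 0 := by
      intro h
      rw [h] at heq
      simp only [div_zero] at heq
      exact hz1 (inv_eq_zero.mp heq.symm)
    rw [one_div] at heq
    have := inv_injective heq
    rw [this]
  have hg0 : ∀ z : ℂ, ‖z‖ < 1 + δ → g (0, z) = 1 - z := by
    have hA : AnalyticOnNhd ℂ (fun z => g (0, z)) (ball (0 : ℂ) (1 + δ)) := by
      refine ((hg_holo 0).analyticOnNhd hV₀open).mono ?_
      intro z hz
      exact hδU z (by simpa [mem_ball_zero_iff] using hz)
    have hB : AnalyticOnNhd ℂ (fun z : ℂ => 1 - z) (ball (0 : ℂ) (1 + δ)) :=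
      analyticOnNhd_const.sub analyticOnNhd_id
    have hEq : Set.EqOn (fun z => g (0, z)) (fun z : ℂ => 1 - z) (ball (0 : ℂ) (1 + δ)) := by
      refine hA.eqOn_of_preconnected_of_eventuallyEq hB
        (convex_ball _ _).isPreconnected
        (mem_ball_self (by linarith)) ?_
      filter_upwards [ball_mem_nhds (0 : ℂ) one_pos] with z hz
      exact hg0_ball z (mem_ball_zero_iff.mp hz)
    intro z hz
    exact hEq (mem_ball_zero_iff.mpr hz)
  -- complex linearity of the partial derivative in the second variable
  have hkey : ∀ p ∈ U, ∀ w : ℂ,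
      fderiv ℝ g p ((0 : Fin d → ℝ), w) = w * fderiv ℂ (fun z => g (p.1, z)) p.2 1 := by
    rintro ⟨x, z⟩ hp w
    have hsliceopen : IsOpen {z' : ℂ | (x, z') ∈ U} :=
      hUopen.preimage (continuous_const.prodMk continuous_id)
    have hsl : DifferentiableAt ℂ (fun z' => g (x, z')) z :=
      (hg_holo x).differentiableAt (hsliceopen.mem_nhds hp)
    set m := fderiv ℂ (fun z' => g (x, z')) z with hm
    have h1 : HasFDerivAt (fun z' => g (x, z')) (m.restrictScalars ℝ) z :=
      hsl.hasFDerivAt.restrictScalars ℝ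
    have hgd : HasFDerivAt g (fderiv ℝ g (x, z)) (x, z) :=
      (hg_diff.differentiableAt (hUopen.mem_nhds hp)).hasFDerivAt
    have h2 : HasFDerivAt (fun z' => g (x, z'))
        ((fderiv ℝ g (x, z)).comp (ContinuousLinearMap.inr ℝ (Fin d → ℝ) ℂ)) z :=
      hgd.comp z (hasFDerivAt_prodMk_right x z)
    have huniq := h1.unique h2
    have := congrFun (congrArg (fun L : ℂ →L[ℝ] ℂ => (L : ℂ → ℂ)) huniq) w
    simp only [ContinuousLinearMap.coe_restrictScalars', ContinuousLinearMap.coe_comp',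
      Function.comp_apply, ContinuousLinearMap.inr_apply] at this
    rw [← this]
    have : m w = w • m 1 := by rw [← m.map_smul, smul_eq_mul, mul_one]
    rw [this, smul_eq_mul]
  have hdec : ∀ p ∈ U, ∀ (u : Fin d → ℝ) (w : ℂ),
      fderiv ℝ g p (u, w) = fderiv ℝ g p (u, 0) + w * fderiv ℝ g p ((0 : Fin d → ℝ), 1) := by
    intro p hp u w
    have hsplit : ((u, w) : (Fin d → ℝ) × ℂ) = (u, 0) + ((0 : Fin d → ℝ), w) := by
      simp
    rw [hsplit, map_add]
    congr 1
    rw [hkey p hp w, hkey p hp 1, one_mul]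
  -- the value of the complex derivative at the base point
  have hc₀ : fderiv ℝ g ((0 : Fin d → ℝ), 1) ((0 : Fin d → ℝ), 1) = -1 := by
    have hp₀U : ((0 : Fin d → ℝ), (1 : ℂ)) ∈ U := hUnhd 1 (by norm_num)
    have h := hkey _ hp₀U 1
    simp only [one_mul] at h
    rw [h]
    have hder : HasDerivAt (fun z : ℂ => g (0, z)) (-1) 1 := by
      have h1 : HasDerivAt (fun z : ℂ => 1 - z) (-1) 1 := (hasDerivAt_id (1 : ℂ)).const_sub 1
      refine h1.congr_of_eventuallyEq ?_
      filter_upwards [Metric.ball_mem_nhds (1 : ℂ) hδpos] with z hz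
      refine hg0 z ?_
      have := mem_ball_iff_norm.mp hz
      calc ‖z‖ ≤ ‖z - 1‖ + ‖(1 : ℂ)‖ := by simpa using norm_add_le (z - 1) 1
        _ < δ + 1 := by simp at this ⊢; linarith
        _ = 1 + δ := by ring
    have : deriv (fun z : ℂ => g (0, z)) 1 = -1 := hder.deriv
    rw [← this]
    rfl
  -- `g` is `C¹` on `U`
  have hgC1 : ContDiffOn ℝ 1 g U := by
    rw [show (1 : WithTop ℕ∞) = 0 + 1 from rfl, contDiffOn_succ_iff_fderiv_of_isOpen hUopen]
    exact ⟨hg_diff, by simp, by rw [contDiffOn_zero]; exact hg_diff2.continuousOn⟩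
  -- the map `F p = (p.1, g p)`
  set F : (Fin d → ℝ) × ℂ → (Fin d → ℝ) × ℂ := fun p => (p.1, g p) with hFdef
  have hDF : ∀ p ∈ U, HasFDerivAt F
      ((ContinuousLinearMap.fst ℝ (Fin d → ℝ) ℂ).prod (fderiv ℝ g p)) p := by
    intro p hp
    exact (hasFDerivAt_fst).prodMk ((hg_diff.differentiableAt (hUopen.mem_nhds hp)).hasFDerivAt)
  set p₀ : (Fin d → ℝ) × ℂ := ((0 : Fin d → ℝ), (1 : ℂ)) with hp₀def
  have hp₀U : p₀ ∈ U := hUnhd 1 (by norm_num)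
  have hdec₀ : ∀ (u : Fin d → ℝ) (w : ℂ),
      fderiv ℝ g p₀ (u, w) = fderiv ℝ g p₀ (u, 0) + w * (-1) := by
    intro u w
    rw [hdec p₀ hp₀U u w, hc₀]
  have hc₀ne : (-1 : ℂ) ≠ 0 := by norm_num
  set equiv₀ := implEquiv (fderiv ℝ g p₀) (-1) hc₀ne hdec₀ with hequiv₀
  have hgC1F : ContDiffOn ℝ 1 F U := (contDiff_fst.contDiffOn).prodMk hgC1
  have hstrict : HasStrictFDerivAt F
      (equiv₀ : ((Fin d → ℝ) × ℂ) →L[ℝ] ((Fin d → ℝ) × ℂ)) p₀ := by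
    have h := (hgC1F.contDiffAt (hUopen.mem_nhds hp₀U)).hasStrictFDerivAt one_ne_zero
    rwa [(hDF p₀ hp₀U).fderiv, ← implEquiv_coe (fderiv ℝ g p₀) (-1) hc₀ne hdec₀] at h
  set Fh := hstrict.toOpenPartialHomeomorph F with hFh
  have hFhcoe : (Fh : ((Fin d → ℝ) × ℂ) → ((Fin d → ℝ) × ℂ)) = F :=
    hstrict.toOpenPartialHomeomorph_coe
  have hsource : p₀ ∈ Fh.source := hstrict.mem_toOpenPartialHomeomorph_source
  have hg01 : g (0, 1) = 0 := by
    have := hg0 1 (by norm_num; linarith)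
    simpa using this
  have hFp₀ : F p₀ = ((0 : Fin d → ℝ), (0 : ℂ)) := by
    simp only [hFdef, hp₀def, hg01]
  have htarget : ((0 : Fin d → ℝ), (0 : ℂ)) ∈ Fh.target := by
    have := hstrict.image_mem_toOpenPartialHomeomorph_target
    rwa [hFp₀] at this
  have hsymm00 : Fh.symm ((0 : Fin d → ℝ), (0 : ℂ)) = p₀ := by
    have h := Fh.left_inv hsource
    rw [show Fh p₀ = ((0 : Fin d → ℝ), (0 : ℂ)) from by rw [← hFp₀]; exact congrFun hFhcoe p₀] at h
    exact h
  -- choose the radius ε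
  obtain ⟨r, hrpos, hrsub⟩ : ∃ r > 0, ball p₀ r ⊆ Fh.source :=
    Metric.isOpen_iff.mp Fh.open_source p₀ hsource
  set ε : ℝ := min r (min (δ / 2) (1 / 2)) with hε
  have hεpos : 0 < ε := lt_min hrpos (lt_min (by linarith) (by norm_num))
  have hεr : ε ≤ r := min_le_left _ _
  have hεδ : ε ≤ δ / 2 := le_trans (min_le_right _ _) (min_le_left _ _)
  have hεhalf : ε ≤ 1 / 2 := le_trans (min_le_right _ _) (min_le_right _ _)
  set Sball : Set ((Fin d → ℝ) × ℂ) := ball (0 : Fin d → ℝ) ε ×ˢ ball (1 : ℂ) ε with hSball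
  have hSsub : Sball ⊆ Fh.source := by
    rw [hSball, ball_prod_same]
    exact subset_trans (ball_subset_ball hεr) hrsub
  set R : ℝ := 1 + δ / 2 with hR
  have hR1 : 1 < R := by rw [hR]; linarith
  have hRδ : R < 1 + δ := by rw [hR]; linarith
  -- tube lemma 1: a neighborhood of 0 whose product with `closedBall 0 R` is inside `U`
  obtain ⟨u₁, v₁, hu₁open, hv₁open, hu₁mem, hv₁mem, hu₁v₁⟩ :
      ∃ u v, IsOpen u ∧ IsOpen v ∧ {(0 : Fin d → ℝ)} ⊆ u ∧ closedBall (0 : ℂ) R ⊆ v ∧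
        u ×ˢ v ⊆ U := by
    refine generalized_tube_lemma isCompact_singleton (isCompact_closedBall 0 R) hUopen ?_
    rintro ⟨x, z⟩ ⟨hx, hz⟩
    rcases hx with rfl
    exact hδU z (lt_of_le_of_lt (mem_closedBall_zero_iff.mp hz) hRδ)
  -- tube lemma 2: away from 1, `g` does not vanish near `x = 0`
  set Kε : Set ℂ := closedBall (0 : ℂ) R \ ball (1 : ℂ) ε with hKε
  have hWopen : IsOpen (U ∩ g ⁻¹' {(0 : ℂ)}ᶜ) :=
    hg_diff.continuousOn.isOpen_inter_preimage hUopen isOpen_compl_singleton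
  obtain ⟨u₂, v₂', hu₂open, hv₂open, hu₂mem, hv₂mem, hu₂v₂⟩ :
      ∃ u v, IsOpen u ∧ IsOpen v ∧ {(0 : Fin d → ℝ)} ⊆ u ∧ Kε ⊆ v ∧
        u ×ˢ v ⊆ U ∩ g ⁻¹' {(0 : ℂ)}ᶜ := by
    refine generalized_tube_lemma isCompact_singleton
      ((isCompact_closedBall 0 R).diff isOpen_ball) hWopen ?_
    rintro ⟨x, z⟩ ⟨hx, hz⟩
    rcases hx with rfl
    have hzR : ‖z‖ < 1 + δ := lt_of_le_of_lt (mem_closedBall_zero_iff.mp hz.1) hRδ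
    refine ⟨hδU z hzR, ?_⟩
    simp only [Set.mem_preimage, Set.mem_compl_iff, Set.mem_singleton_iff]
    rw [hg0 z hzR]
    intro h
    have hz1 : z = 1 := by linear_combination -h
    apply hz.2
    rw [hz1]
    exact mem_ball_self hεpos
  -- the implicit function
  set b : (Fin d → ℝ) → ℂ := fun x => (Fh.symm (x, 0)).2 with hb
  have hb0 : b 0 = 1 := by rw [hb]; simp only [hsymm00, hp₀def]
  -- continuity of `x ↦ fderiv ℝ g (x, b x) (0, 1)` at 0
  have ht2 : Tendsto (fun x : Fin d → ℝ => (x, (0 : ℂ))) (𝓝 0)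
      (𝓝 ((0 : Fin d → ℝ), (0 : ℂ))) :=
    (continuous_id.prodMk continuous_const).tendsto' 0 _ rfl
  have ht1 : Tendsto Fh.symm (𝓝 ((0 : Fin d → ℝ), (0 : ℂ))) (𝓝 p₀) := by
    have := Fh.continuousAt_symm htarget
    rwa [ContinuousAt, hsymm00] at this
  have hbcont : ContinuousAt b 0 := by
    show Tendsto b (𝓝 0) (𝓝 (b 0))
    rw [hb0]
    have ht0 : Tendsto (Prod.snd : (Fin d → ℝ) × ℂ → ℂ) (𝓝 p₀) (𝓝 (1 : ℂ)) :=
      continuous_snd.tendsto' p₀ 1 rfl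
    exact ht0.comp (ht1.comp ht2)
  set cfun : (Fin d → ℝ) → ℂ := fun x => fderiv ℝ g (x, b x) ((0 : Fin d → ℝ), 1) with hcfun
  have hcfun0 : cfun 0 = -1 := by
    rw [hcfun]
    simp only [hb0]
    exact hc₀
  have hcfuncont : ContinuousAt cfun 0 := by
    have t1 : Tendsto (fun x : Fin d → ℝ => ((x, b x) : (Fin d → ℝ) × ℂ)) (𝓝 0) (𝓝 p₀) := by
      have h1 : ContinuousAt (fun x : Fin d → ℝ => ((x, b x) : (Fin d → ℝ) × ℂ)) 0 :=
        continuousAt_id.prodMk hbcont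
      have : ((0 : Fin d → ℝ), b 0) = p₀ := by rw [hb0]
      rwa [ContinuousAt, this] at h1
    have t2 : Tendsto (fderiv ℝ g) (𝓝 p₀) (𝓝 (fderiv ℝ g p₀)) :=
      hg_diff2.continuousOn.continuousAt (hUopen.mem_nhds hp₀U)
    have t3 : Tendsto (⇑(ContinuousLinearMap.apply ℝ ℂ (((0 : Fin d → ℝ), 1) :
        (Fin d → ℝ) × ℂ))) (𝓝 (fderiv ℝ g p₀)) (𝓝 (fderiv ℝ g p₀ ((0 : Fin d → ℝ), 1))) :=
      ((ContinuousLinearMap.apply ℝ ℂ _).continuous.tendsto _)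
    show Tendsto cfun (𝓝 0) (𝓝 (cfun 0))
    have hv : cfun 0 = fderiv ℝ g p₀ ((0 : Fin d → ℝ), 1) := by
      rw [hcfun]
      simp only [hb0, hp₀def]
    rw [hv]
    exact t3.comp (t2.comp t1)
  -- the combined neighborhood conditions
  have hPev : ∀ᶠ x in 𝓝 (0 : Fin d → ℝ),
      x ∈ u₁ ∧ x ∈ u₂ ∧ x ∈ ball (0 : Fin d → ℝ) ε ∧
      ((x, (0 : ℂ)) ∈ Fh.target ∧ Fh.symm (x, 0) ∈ Sball) ∧ cfun x ≠ 0 := by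
    have e1 : ∀ᶠ x in 𝓝 (0 : Fin d → ℝ), x ∈ u₁ :=
      hu₁open.mem_nhds (hu₁mem rfl)
    have e2 : ∀ᶠ x in 𝓝 (0 : Fin d → ℝ), x ∈ u₂ :=
      hu₂open.mem_nhds (hu₂mem rfl)
    have e3 : ∀ᶠ x in 𝓝 (0 : Fin d → ℝ), x ∈ ball (0 : Fin d → ℝ) ε :=
      isOpen_ball.mem_nhds (mem_ball_self hεpos)
    have e4 : ∀ᶠ x in 𝓝 (0 : Fin d → ℝ),
        (x, (0 : ℂ)) ∈ Fh.target ∧ Fh.symm (x, 0) ∈ Sball := by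
      have hTopen : IsOpen (Fh.target ∩ Fh.symm ⁻¹' Sball) :=
        Fh.continuousOn_symm.isOpen_inter_preimage Fh.open_target
          (by rw [hSball]; exact isOpen_ball.prod isOpen_ball)
      have hTmem : ((0 : Fin d → ℝ), (0 : ℂ)) ∈ Fh.target ∩ Fh.symm ⁻¹' Sball := by
        refine ⟨htarget, ?_⟩
        simp only [Set.mem_preimage, hsymm00, hSball, hp₀def]
        exact ⟨mem_ball_self hεpos, mem_ball_self hεpos⟩
      have hcont : Continuous (fun x : Fin d → ℝ => ((x, (0 : ℂ)) : (Fin d → ℝ) × ℂ)) :=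
        continuous_id.prodMk continuous_const
      have := (hTopen.preimage hcont).mem_nhds
        (by simp only [Set.mem_preimage]; exact hTmem)
      filter_upwards [this] with x hx
      exact hx
    have e5 : ∀ᶠ x in 𝓝 (0 : Fin d → ℝ), cfun x ≠ 0 := by
      have h0 : cfun 0 ≠ 0 := by rw [hcfun0]; norm_num
      exact hcfuncont.eventually_ne h0
    filter_upwards [e1, e2, e3, e4, e5] with x h1 h2 h3 h4 h5
    exact ⟨h1, h2, h3, h4, h5⟩
  obtain ⟨V₁, hV₁P, hV₁open, hV₁0⟩ := _root_.eventually_nhds_iff.mp hPev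
  set V₂ : Set ℂ := ball (0 : ℂ) R with hV₂
  -- pointwise structural facts for `x ∈ V₁`
  have hfacts : ∀ x ∈ V₁, Fh.symm (x, (0 : ℂ)) = (x, b x) ∧ g (x, b x) = 0 ∧
      b x ∈ ball (1 : ℂ) ε ∧ (x, b x) ∈ U ∧ (x, b x) ∈ Fh.source := by
    intro x hx
    obtain ⟨hxu₁, hxu₂, hxball, ⟨hxt, hxs⟩, hxc⟩ := hV₁P x hx
    have hri : Fh (Fh.symm (x, (0 : ℂ))) = (x, 0) := Fh.right_inv hxt
    rw [congrFun hFhcoe (Fh.symm (x, (0 : ℂ)))] at hri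
    have hfst : (Fh.symm (x, (0 : ℂ))).1 = x := congrArg Prod.fst hri
    have hpair : Fh.symm (x, (0 : ℂ)) = (x, b x) := by
      rw [hb]
      exact Prod.ext hfst rfl
    have hgb : g (x, b x) = 0 := by
      have := congrArg Prod.snd hri
      rw [hpair] at this
      exact this
    have hbball : b x ∈ ball (1 : ℂ) ε := by
      have := hxs
      rw [hpair, hSball] at this
      exact this.2
    have hbU : (x, b x) ∈ U := by
      apply hu₁v₁
      refine ⟨hxu₁, hv₁mem ?_⟩
      rw [mem_closedBall_zero_iff]
      have h1 : ‖b x - 1‖ < ε := mem_ball_iff_norm.mp hbball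
      have h2 : ‖b x‖ ≤ ‖b x - 1‖ + ‖(1 : ℂ)‖ := by
        simpa using norm_add_le (b x - 1) 1
      have h3 : ‖(1 : ℂ)‖ = 1 := norm_one
      rw [hR]
      rw [h3] at h2
      linarith
    have hbsource : (x, b x) ∈ Fh.source := by
      rw [← hpair]
      exact Fh.map_target hxt
    exact ⟨hpair, hgb, hbball, hbU, hbsource⟩
  -- `b x` is close to 1, hence nonzero and in `V₂`
  have hbnear : ∀ x ∈ V₁, ‖b x - 1‖ < ε := fun x hx =>
    mem_ball_iff_norm.mp (hfacts x hx).2.2.1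
  have hbne : ∀ x ∈ V₁, b x ≠ 0 := by
    intro x hx h0
    have h1 := hbnear x hx
    rw [h0] at h1
    simp only [zero_sub, norm_neg, norm_one] at h1
    linarith
  -- the iff
  have hiff : ∀ x ∈ V₁, ∀ z ∈ V₂, (g (x, z) = 0 ↔ z = b x) := by
    intro x hx z hz
    obtain ⟨hpair, hgb, hbball, hbU, hbsource⟩ := hfacts x hx
    obtain ⟨hxu₁, hxu₂, hxball, ⟨hxt, hxs⟩, hxc⟩ := hV₁P x hx
    constructor
    · intro hgz
      by_cases hzball : z ∈ ball (1 : ℂ) ε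
      · -- injectivity argument
        have hzs : ((x, z) : (Fin d → ℝ) × ℂ) ∈ Fh.source := hSsub ⟨hxball, hzball⟩
        have h1 : Fh (x, z) = ((x, (0 : ℂ)) : (Fin d → ℝ) × ℂ) := by
          rw [congrFun hFhcoe (x, z)]
          rw [hFdef]
          simp only [hgz]
        have h2 : Fh (x, b x) = ((x, (0 : ℂ)) : (Fin d → ℝ) × ℂ) := by
          rw [← hpair]
          exact Fh.right_inv hxt
        have h3 : ((x, z) : (Fin d → ℝ) × ℂ) = (x, b x) :=
          Fh.injOn hzs hbsource (h1.trans h2.symm)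
        exact congrArg Prod.snd h3
      · exfalso
        have hzK : z ∈ Kε := ⟨ball_subset_closedBall hz, hzball⟩
        have hW := hu₂v₂ (Set.mk_mem_prod hxu₂ (hv₂mem hzK))
        exact hW.2 hgz
    · intro h
      rw [h]
      exact hgb
  -- first-order differentiability with explicit derivative
  set β : (Fin d → ℝ) → ((Fin d → ℝ) →L[ℝ] ℂ) := fun x =>
    (-(cfun x)⁻¹) • ((fderiv ℝ g (x, b x)).comp
      (ContinuousLinearMap.inl ℝ (Fin d → ℝ) ℂ)) with hβ
  have hbderiv : ∀ x ∈ V₁, HasFDerivAt b (β x) x := by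
    intro x hx
    obtain ⟨hpair, hgb, hbball, hbU, hbsource⟩ := hfacts x hx
    obtain ⟨hxu₁, hxu₂, hxball, ⟨hxt, hxs⟩, hxc⟩ := hV₁P x hx
    have hdecx : ∀ (u : Fin d → ℝ) (w : ℂ),
        fderiv ℝ g (x, b x) (u, w) = fderiv ℝ g (x, b x) (u, 0) + w * cfun x :=
      fun u w => hdec (x, b x) hbU u w
    set eqx := implEquiv (fderiv ℝ g (x, b x)) (cfun x) hxc hdecx with heqx
    have hFq : HasFDerivAt F
        (eqx : ((Fin d → ℝ) × ℂ) →L[ℝ] ((Fin d → ℝ) × ℂ)) (x, b x) := by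
      rw [heqx, implEquiv_coe]
      exact hDF (x, b x) hbU
    have hFq' : HasFDerivAt F
        (eqx : ((Fin d → ℝ) × ℂ) →L[ℝ] ((Fin d → ℝ) × ℂ)) (Fh.symm (x, (0 : ℂ))) := by
      rw [hpair]; exact hFq
    have hev : ∀ᶠ y in 𝓝 ((x, (0 : ℂ)) : (Fin d → ℝ) × ℂ), F (Fh.symm y) = y := by
      filter_upwards [Fh.open_target.mem_nhds hxt] with y hy
      rw [← congrFun hFhcoe (Fh.symm y)]
      exact Fh.right_inv hy
    have hGx : HasFDerivAt Fh.symm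
        ((eqx.symm : ((Fin d → ℝ) × ℂ) →L[ℝ] ((Fin d → ℝ) × ℂ))) (x, (0 : ℂ)) :=
      HasFDerivAt.of_local_left_inverse (Fh.continuousAt_symm hxt) hFq' hev
    have hinl : HasFDerivAt (fun u : Fin d → ℝ => ((u, (0 : ℂ)) : (Fin d → ℝ) × ℂ))
        (ContinuousLinearMap.inl ℝ (Fin d → ℝ) ℂ) x := hasFDerivAt_prodMk_left x 0
    have hGx' : HasFDerivAt (fun u : Fin d → ℝ => Fh.symm (u, (0 : ℂ)))
        ((eqx.symm : ((Fin d → ℝ) × ℂ) →L[ℝ] ((Fin d → ℝ) × ℂ)).comp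
          (ContinuousLinearMap.inl ℝ (Fin d → ℝ) ℂ)) x := hGx.comp x hinl
    have hsnd : HasFDerivAt (Prod.snd : (Fin d → ℝ) × ℂ → ℂ)
        (ContinuousLinearMap.snd ℝ (Fin d → ℝ) ℂ)
        ((fun u : Fin d → ℝ => Fh.symm (u, (0 : ℂ))) x) := hasFDerivAt_snd
    have hcomp := hsnd.comp x hGx'
    have hfinal : HasFDerivAt b
        ((ContinuousLinearMap.snd ℝ (Fin d → ℝ) ℂ).comp
          (((eqx.symm : ((Fin d → ℝ) × ℂ) →L[ℝ] ((Fin d → ℝ) × ℂ))).comp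
            (ContinuousLinearMap.inl ℝ (Fin d → ℝ) ℂ))) x := hcomp
    have hβeq : (ContinuousLinearMap.snd ℝ (Fin d → ℝ) ℂ).comp
          (((eqx.symm : ((Fin d → ℝ) × ℂ) →L[ℝ] ((Fin d → ℝ) × ℂ))).comp
            (ContinuousLinearMap.inl ℝ (Fin d → ℝ) ℂ)) = β x := by
      ext u
      simp only [ContinuousLinearMap.coe_comp', Function.comp_apply,
        ContinuousLinearMap.inl_apply, ContinuousLinearMap.coe_snd',
        ContinuousLinearEquiv.coe_coe, hβ, ContinuousLinearMap.smul_apply,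
        ContinuousLinearMap.coe_comp', smul_eq_mul]
      rw [heqx, implEquiv_symm_apply]
      simp only [ContinuousLinearMap.coe_comp', Function.comp_apply,
        ContinuousLinearMap.inl_apply]
      ring
    rw [← hβeq]
    exact hfinal
  have hbdiff : DifferentiableOn ℝ b V₁ := fun x hx =>
    ((hbderiv x hx).differentiableAt).differentiableWithinAt
  -- second-order differentiability
  have hβdiff : DifferentiableOn ℝ β V₁ := by
    have hφ : DifferentiableOn ℝ (fun x : Fin d → ℝ => ((x, b x) : (Fin d → ℝ) × ℂ)) V₁ :=
      (differentiableOn_id).prodMk hbdiff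
    have hmaps : Set.MapsTo (fun x : Fin d → ℝ => ((x, b x) : (Fin d → ℝ) × ℂ)) V₁ U :=
      fun x hx => (hfacts x hx).2.2.2.1
    have hD2 : DifferentiableOn ℝ (fun x : Fin d → ℝ => fderiv ℝ g (x, b x)) V₁ :=
      (hg_diff2.comp hφ hmaps)
    have hcdiff : DifferentiableOn ℝ cfun V₁ := by
      have := hD2.clm_apply (differentiableOn_const (((0 : Fin d → ℝ), 1) :
        (Fin d → ℝ) × ℂ))
      exact this
    have hcinv : DifferentiableOn ℝ (fun x => -(cfun x)⁻¹) V₁ := by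
      refine DifferentiableOn.neg ?_
      intro x hx
      exact (hcdiff x hx).inv (hV₁P x hx).2.2.2.2
    have hA : DifferentiableOn ℝ (fun x : Fin d → ℝ =>
        (fderiv ℝ g (x, b x)).comp (ContinuousLinearMap.inl ℝ (Fin d → ℝ) ℂ)) V₁ :=
      hD2.clm_comp (differentiableOn_const _)
    exact hcinv.smul hA
  have hfderivb : DifferentiableOn ℝ (fderiv ℝ b) V₁ := by
    refine hβdiff.congr ?_
    intro x hx
    exact (hbderiv x hx).fderiv
  refine ⟨V₁, V₂, b, hV₁open, hV₁0, isOpen_ball, ?_, ?_, hbdiff, hfderivb, hb0, hbne, hiff⟩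
  · intro z hz
    rw [hV₂, mem_ball_zero_iff]
    linarith [hz]
  · rintro ⟨x, z⟩ ⟨hx, hz⟩
    exact hu₁v₁ ⟨(hV₁P x hx).1, hv₁mem (ball_subset_closedBall hz)⟩
end

section
/- Under the standing hypotheses, let b be the twice differentiable function near 0 ∈ ℝ^d with b(0)=1 and g(x,b(x))=0 (given by the implicit function theorem applied to g at (0,1)). Then log(b(x)) has the second-order Taylor expansion log(b(x)) = −i⟨μ,x⟩ + (1/2)⟨x, Σx⟩ + o(|x|²) as x → 0, where μ_j = i·g_{x_j}(0,1) and Σ_{j,k} = g_{x_j x_k}(0,1) − i(μ_j g_{x_k z}(0,1) + μ_k g_{x_j z}(0,1)) + μ_j μ_k. -/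
open MeasureTheory ProbabilityTheory Complex Filter Topology Metric

section Aux

variable {E F : Type*} [NormedAddCommGroup E] [NormedSpace ℝ E]
  [NormedAddCommGroup F] [NormedSpace ℝ F]

/-- derivative of the quadratic form x ↦ B x x -/
lemma hasFDerivAt_quadratic (B : E →L[ℝ] E →L[ℝ] F) (y : E) :
    HasFDerivAt (fun x => B x x) (B y + (ContinuousLinearMap.flip B) y) y := by
  have h1 : HasFDerivAt (fun p : E × E => B p.1 p.2)
      ((B.isBoundedBilinearMap).deriv (y, y)) (y, y) :=
    (B.isBoundedBilinearMap).hasFDerivAt (y, y)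
  have h2 : HasFDerivAt (fun x : E => (x, x))
      ((ContinuousLinearMap.id ℝ E).prod (ContinuousLinearMap.id ℝ E)) y :=
    ((hasFDerivAt_id y).prodMk (hasFDerivAt_id y))
  have h3 := HasFDerivAt.comp (f := fun x : E => ((x,x) : E × E)) y h1 h2
  refine h3.congr_fderiv ?_
  ext w
  simp [IsBoundedBilinearMap.deriv]

theorem taylor2_peano {f : E → F} {s : Set E} (hs : IsOpen s) (h0 : (0:E) ∈ s)
    (hf : DifferentiableOn ℝ f s)
    (hf' : DifferentiableAt ℝ (fderiv ℝ f) 0) :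
    (fun x => f x - f 0 - fderiv ℝ f 0 x - (1/2 : ℝ) • fderiv ℝ (fderiv ℝ f) 0 x x)
      =o[𝓝 (0:E)] fun x => ‖x‖ ^ 2 := by
  set A := fderiv ℝ f 0 with hA
  set B := fderiv ℝ (fderiv ℝ f) 0 with hB
  have hev : ∀ᶠ y in 𝓝 (0:E), HasFDerivAt f (fderiv ℝ f y) y := by
    filter_upwards [hs.mem_nhds h0] with y hy
    exact (hf.differentiableAt (hs.mem_nhds hy)).hasFDerivAt
  have hsymm : ∀ v w, B v w = B w v :=
    second_derivative_symmetric_of_eventually hev hf'.hasFDerivAt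
  set Q : E → F := fun x => f x - A x - (1/2 : ℝ) • B x x with hQ
  have hQderiv : ∀ᶠ y in 𝓝 (0:E), HasFDerivAt Q (fderiv ℝ f y - A - B y) y := by
    filter_upwards [hev] with y hy
    have h1 : HasFDerivAt (fun x => (1/2:ℝ) • B x x)
        ((1/2:ℝ) • (B y + (ContinuousLinearMap.flip B) y)) y :=
      (hasFDerivAt_quadratic B y).const_smul (1/2:ℝ)
    have h2 := (hy.sub (A.hasFDerivAt)).sub h1
    convert h2 using 1
    · rfl
    ext w
    have := hsymm y w
    simp [ContinuousLinearMap.flip_apply]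
    rw [this]
    module
  rw [Asymptotics.isLittleO_iff]
  intro c hc
  have hlin : (fun y => fderiv ℝ f y - A - B y) =o[𝓝 (0:E)] fun y => y := by
    have := hf'.hasFDerivAt.isLittleO
    simpa using this
  rw [Asymptotics.isLittleO_iff] at hlin
  have hball := (hlin hc).and hQderiv
  rw [Metric.eventually_nhds_iff] at hball ⊢
  obtain ⟨r, hr, hrb⟩ := hball
  refine ⟨r, hr, fun {x} hx => ?_⟩
  have key : ‖Q x - Q 0‖ ≤ (c * ‖x‖) * ‖x - 0‖ := by
    have hconv : Convex ℝ (closedBall (0:E) ‖x‖ ∩ ball (0:E) r) :=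
      (convex_closedBall _ _).inter (convex_ball _ _)
    refine hconv.norm_image_sub_le_of_norm_hasFDerivWithin_le
      (fun y hy => ((hrb (by simpa using hy.2)).2).hasFDerivWithinAt)
      (fun y hy => ?_) ⟨by simp, by simpa using hr⟩
      ⟨by simp [mem_closedBall, dist_eq_norm], by simpa using hx⟩
    have h1 := (hrb (show dist y 0 < r by simpa using hy.2)).1
    calc ‖fderiv ℝ f y - A - B y‖ ≤ c * ‖y‖ := by simpa using h1
      _ ≤ c * ‖x‖ := by
          have : ‖y‖ ≤ ‖x‖ := by simpa [dist_eq_norm] using hy.1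
          exact mul_le_mul_of_nonneg_left this hc.le
  have hQ0 : Q 0 = f 0 := by simp [hQ]
  calc ‖f x - f 0 - A x - (1/2:ℝ) • B x x‖ = ‖Q x - Q 0‖ := by
        rw [hQ0]; congr 1; simp only [hQ]; abel
    _ ≤ (c * ‖x‖) * ‖x - 0‖ := key
    _ = c * ‖‖x‖^2‖ := by rw [sub_zero]; simp [pow_two]; ring

/-- expanding a CLM on `Fin d → ℝ` along the canonical basis -/
lemma clm_pi_apply {d : ℕ} {M : Type*} [NormedAddCommGroup M] [NormedSpace ℝ M]
    (L : (Fin d → ℝ) →L[ℝ] M) (x : Fin d → ℝ) :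
    L x = ∑ j, x j • L (Pi.single j 1) := by
  have hx : x = ∑ j, x j • (Pi.single j (1:ℝ) : Fin d → ℝ) := by
    ext k
    simp [Pi.single_apply]
  calc L x = L (∑ j, x j • (Pi.single j (1:ℝ) : Fin d → ℝ)) := by rw [← hx]
    _ = ∑ j, x j • L (Pi.single j 1) := by
        rw [map_sum]
        simp

lemma logTaylor_three (u : ℂ) : Complex.logTaylor 3 u = u - u^2/2 := by
  simp [Complex.logTaylor, Finset.sum_range_succ]
  ring

end Aux

set_option maxHeartbeats 1000000 in
/-- Under the standing hypotheses, with `b` the implicit function at `(0,1)`, `log(b(x))`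
has the second-order Taylor expansion `-i⟨μ,x⟩ + ½⟨x, Σx⟩ + o(|x|²)` as `x → 0`. -/
theorem stmt10 {d : ℕ} (hd : 0 < d)
    {Ω : Type*} [MeasureSpace Ω] [IsProbabilityMeasure (ℙ : Measure Ω)]
    (Y : ℕ → Ω → Fin d → ℝ) (hYmeas : ∀ n, Measurable (Y n))
    -- `U` is an open neighborhood of `{0} × {z : |z| ≤ 1}` in `ℝ^d × ℂ`
    (U : Set ((Fin d → ℝ) × ℂ)) (hUopen : IsOpen U)
    (hUnhd : ∀ z : ℂ, ‖z‖ ≤ 1 → ((0 : Fin d → ℝ), z) ∈ U)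
    (g : (Fin d → ℝ) × ℂ → ℂ)
    -- (i) `g(x, z)` is holomorphic in `z` for each fixed `x`
    (hg_holo : ∀ x : Fin d → ℝ, DifferentiableOn ℂ (fun z => g (x, z)) {z | (x, z) ∈ U})
    -- (ii) `g` is twice differentiable on `U`
    (hg_diff : DifferentiableOn ℝ g U)
    (hg_diff2 : DifferentiableOn ℝ (fderiv ℝ g) U)
    -- (iii) `∑ φ_{Y_n}(x) z^n = 1/g(x,z)` for `(x,z) ∈ U`, `|z| < 1`
    -- (in particular `g` is nonvanishing there)
    (hg_ne : ∀ x z, (x, z) ∈ U → ‖z‖ < 1 → g (x, z) ≠ 0)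
    (hg_sum : ∀ x z, (x, z) ∈ U → ‖z‖ < 1 →
      HasSum (fun n : ℕ => charFn (Y n) x * z ^ n) (1 / g (x, z)))
    -- `b` is the twice differentiable function near `0` with `b(0) = 1` and `g(x, b(x)) = 0`,
    -- given by the implicit function theorem applied to `g` at `(0, 1)`
    (V₁ : Set (Fin d → ℝ)) (hV₁ : IsOpen V₁) (hV₁0 : (0 : Fin d → ℝ) ∈ V₁)
    (b : (Fin d → ℝ) → ℂ)
    (hb_diff : DifferentiableOn ℝ b V₁) (hb_diff2 : DifferentiableOn ℝ (fderiv ℝ b) V₁)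
    (hb0 : b 0 = 1) (hgb : ∀ x ∈ V₁, g (x, b x) = 0)
    -- `μ_j = i g_{x_j}(0,1)`
    (μ : Fin d → ℂ)
    (hμ : ∀ j, μ j = Complex.I * fderiv ℝ g (0, 1) (Pi.single j 1, 0))
    -- `Σ_{j,k} = g_{x_j x_k}(0,1) - i(μ_j g_{x_k z}(0,1) + μ_k g_{x_j z}(0,1)) + μ_j μ_k`
    (Sig : Fin d → Fin d → ℂ)
    (hSig : ∀ j k, Sig j k =
      pd2 g (0, 1) (Pi.single j 1, 0) (Pi.single k 1, 0)
        - Complex.I * (μ j * pd2 g (0, 1) (Pi.single k 1, 0) (0, 1)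
          + μ k * pd2 g (0, 1) (Pi.single j 1, 0) (0, 1))
        + μ j * μ k) :
    (fun x : Fin d → ℝ =>
        Complex.log (b x) + Complex.I * (∑ j, μ j * x j)
          - (1/2) * ∑ j, ∑ k, Sig j k * x j * x k)
      =o[𝓝 (0 : Fin d → ℝ)] (fun x => ‖x‖ ^ 2) := by
  -- ### notation
  set p₀ : (Fin d → ℝ) × ℂ := ((0 : Fin d → ℝ), (1 : ℂ)) with hp₀
  have hU0 : p₀ ∈ U := hUnhd 1 (by norm_num)
  have hgdiffAt : ∀ p ∈ U, DifferentiableAt ℝ g p :=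
    fun p hp => hg_diff.differentiableAt (hUopen.mem_nhds hp)
  set inr : ℂ →L[ℝ] (Fin d → ℝ) × ℂ :=
    (0 : ℂ →L[ℝ] (Fin d → ℝ)).prod (ContinuousLinearMap.id ℝ ℂ) with hinr
  have hinr_at : ∀ z : ℂ, HasFDerivAt (fun z : ℂ => (((0 : Fin d → ℝ), z) : (Fin d → ℝ) × ℂ))
      inr z := fun z => (hasFDerivAt_const (0 : Fin d → ℝ) z).prodMk (hasFDerivAt_id z)
  have hinr_app : ∀ (L : ((Fin d → ℝ) × ℂ) →L[ℝ] ℂ) (w : ℂ),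
      (L.comp inr) w = L ((0 : Fin d → ℝ), w) := by
    intro L w
    simp [hinr]
  -- ### Step A : g (0, z) = 1 - z near 1
  set S : Set ℂ := {z | ((0 : Fin d → ℝ), z) ∈ U} with hSdef
  have hSopen : IsOpen S := hUopen.preimage (Continuous.prodMk_right (0 : Fin d → ℝ))
  have hSball : closedBall (0:ℂ) 1 ⊆ S := fun z hz => hUnhd z (by simpa using hz)
  set W := connectedComponentIn S 1 with hWdef
  have hWopen : IsOpen W := hSopen.connectedComponentIn
  have hWsub : W ⊆ S := connectedComponentIn_subset S 1
  have h1W : (1:ℂ) ∈ W := mem_connectedComponentIn (hSball (by simp))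
  have hballW : closedBall (0:ℂ) 1 ⊆ W :=
    (convex_closedBall _ _).isPreconnected.subset_connectedComponentIn (by simp) hSball
  have hdisk : ∀ z : ℂ, ‖z‖ < 1 → g (0, z) = 1 - z := by
    intro z hz
    have hzU : ((0 : Fin d → ℝ), z) ∈ U := hUnhd z hz.le
    have h1 := hg_sum 0 z hzU hz
    have hφ : ∀ n : ℕ, charFn (Y n) (0 : Fin d → ℝ) = 1 := by
      intro n
      simp [charFn]
    have h2 : HasSum (fun n : ℕ => z ^ n) (1 / g (0, z)) := by simpa [hφ] using h1
    have h3 : HasSum (fun n : ℕ => z ^ n) ((1 - z)⁻¹) := hasSum_geometric_of_norm_lt_one hz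
    have h4 := h2.unique h3
    rw [one_div] at h4
    exact inv_injective h4
  have hGeq : Set.EqOn (fun z => g ((0 : Fin d → ℝ), z)) (fun z => 1 - z) W := by
    refine AnalyticOnNhd.eqOn_of_preconnected_of_eventuallyEq
      (((hg_holo 0).mono hWsub).analyticOnNhd hWopen)
      (analyticOnNhd_const.sub analyticOnNhd_id)
      isPreconnected_connectedComponentIn (hballW (show (0:ℂ) ∈ closedBall 0 1 by simp)) ?_
    filter_upwards [Metric.ball_mem_nhds (0:ℂ) one_pos] with z hz
    exact hdisk z (by simpa using hz)
  have hGeq' : ∀ z ∈ W, (fun z => g ((0 : Fin d → ℝ), z)) =ᶠ[𝓝 z] (fun z => 1 - z) :=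
    fun z hz => Filter.eventuallyEq_of_mem (hWopen.mem_nhds hz) hGeq
  -- ### Step B : derivatives of g in the z-direction
  have hchain : ∀ z : ℂ, ((0 : Fin d → ℝ), z) ∈ U →
      HasFDerivAt (fun z : ℂ => g ((0 : Fin d → ℝ), z))
        ((fderiv ℝ g ((0 : Fin d → ℝ), z)).comp inr) z := by
    intro z hz
    exact (hgdiffAt _ hz).hasFDerivAt.comp z (hinr_at z)
  have fact1 : ∀ z ∈ W, ∀ w : ℂ, fderiv ℝ g ((0 : Fin d → ℝ), z) ((0 : Fin d → ℝ), w) = -w := by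
    intro z hz w
    have h1 := hchain z (hWsub hz)
    have h2 : HasFDerivAt (fun z : ℂ => (1:ℂ) - z)
        ((0 : ℂ →L[ℝ] ℂ) - ContinuousLinearMap.id ℝ ℂ) z :=
      (hasFDerivAt_const (1:ℂ) z).sub (hasFDerivAt_id z)
    have h3 : HasFDerivAt (fun z : ℂ => g ((0 : Fin d → ℝ), z))
        ((0 : ℂ →L[ℝ] ℂ) - ContinuousLinearMap.id ℝ ℂ) z :=
      h2.congr_of_eventuallyEq (hGeq' z hz)
    have h4 := h1.unique h3
    rw [← hinr_app _ w, h4]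
    simp
  have gz1 : ∀ w : ℂ, fderiv ℝ g p₀ ((0 : Fin d → ℝ), w) = -w := fact1 1 h1W
  -- complex linearity of the z-partial
  have fact3 : ∀ p ∈ U, ∀ w : ℂ,
      fderiv ℝ g p ((0 : Fin d → ℝ), w) = w * fderiv ℝ g p ((0 : Fin d → ℝ), 1) := by
    rintro ⟨x, z⟩ hp w
    have hsl : IsOpen {z : ℂ | (x, z) ∈ U} := hUopen.preimage (Continuous.prodMk_right x)
    have hz : DifferentiableAt ℂ (fun z => g (x, z)) z :=
      (hg_holo x).differentiableAt (hsl.mem_nhds hp)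
    set Lc := fderiv ℂ (fun z => g (x, z)) z with hLc
    have h1 : HasFDerivAt (fun z => g (x, z)) (Lc.restrictScalars ℝ) z :=
      hz.hasFDerivAt.restrictScalars ℝ
    have h2 : HasFDerivAt (fun z : ℂ => g (x, z)) ((fderiv ℝ g (x, z)).comp
        ((0 : ℂ →L[ℝ] (Fin d → ℝ)).prod (ContinuousLinearMap.id ℝ ℂ))) z :=
      (hgdiffAt _ hp).hasFDerivAt.comp z
        ((hasFDerivAt_const x z).prodMk (hasFDerivAt_id z))
    have h4 := h2.unique h1
    have h5 : ∀ u : ℂ, fderiv ℝ g (x, z) ((0 : Fin d → ℝ), u) = Lc u := by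
      intro u
      have h6 : fderiv ℝ g (x, z) ((0 : Fin d → ℝ), u) = ((fderiv ℝ g (x, z)).comp
        ((0 : ℂ →L[ℝ] (Fin d → ℝ)).prod (ContinuousLinearMap.id ℝ ℂ))) u := by simp
      rw [h6, h4]
      rfl
    rw [h5 w, h5 1]
    have : w = w • (1:ℂ) := by simp
    conv_lhs => rw [this, Lc.map_smul]
    simp
  -- second derivative of g at p₀
  have hgd2At : DifferentiableAt ℝ (fderiv ℝ g) p₀ :=
    hg_diff2.differentiableAt (hUopen.mem_nhds hU0)
  set D2 : ((Fin d → ℝ) × ℂ) →L[ℝ] ((Fin d → ℝ) × ℂ) →L[ℝ] ℂ := fderiv ℝ (fderiv ℝ g) p₀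
    with hD2def
  have hD2 : HasFDerivAt (fderiv ℝ g) D2 p₀ := hgd2At.hasFDerivAt
  have hevg : ∀ᶠ y in 𝓝 p₀, HasFDerivAt g (fderiv ℝ g y) y := by
    filter_upwards [hUopen.mem_nhds hU0] with y hy
    exact (hgdiffAt y hy).hasFDerivAt
  have fact5 : ∀ u v, D2 u v = D2 v u :=
    second_derivative_symmetric_of_eventually hevg hD2
  -- g_zz (0,1) = 0
  have fact2 : D2 ((0 : Fin d → ℝ), 1) ((0 : Fin d → ℝ), 1) = 0 := by
    have hc : HasFDerivAt (fun z : ℂ => fderiv ℝ g ((0 : Fin d → ℝ), z)) (D2.comp inr) 1 :=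
      hD2.comp 1 (hinr_at 1)
    have h1 : HasFDerivAt (fun z : ℂ => fderiv ℝ g ((0 : Fin d → ℝ), z) ((0 : Fin d → ℝ), 1))
        ((fderiv ℝ g p₀).comp (0 : ℂ →L[ℝ] (Fin d → ℝ) × ℂ) + (D2.comp inr).flip
          ((0 : Fin d → ℝ), 1)) 1 :=
      hc.clm_apply (hasFDerivAt_const ((0 : Fin d → ℝ), (1:ℂ)) 1)
    have h0 : HasFDerivAt (fun z : ℂ => fderiv ℝ g ((0 : Fin d → ℝ), z) ((0 : Fin d → ℝ), 1))
        (0 : ℂ →L[ℝ] ℂ) 1 := by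
      refine (hasFDerivAt_const (-1 : ℂ) 1).congr_of_eventuallyEq ?_
      filter_upwards [hWopen.mem_nhds h1W] with z hz
      exact fact1 z hz 1
    have h4 := h1.unique h0
    have h5 := ContinuousLinearMap.ext_iff.mp h4 1
    simpa [hinr] using h5
  -- complex linearity of the second derivative in the z slot
  have fact4 : ∀ u : (Fin d → ℝ) × ℂ, ∀ w : ℂ,
      D2 u ((0 : Fin d → ℝ), w) = w * D2 u ((0 : Fin d → ℝ), 1) := by
    intro u w
    have h1 : HasFDerivAt (fun p => fderiv ℝ g p ((0 : Fin d → ℝ), w))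
        ((fderiv ℝ g p₀).comp (0 : ((Fin d → ℝ) × ℂ) →L[ℝ] (Fin d → ℝ) × ℂ)
          + D2.flip ((0 : Fin d → ℝ), w)) p₀ :=
      hD2.clm_apply (hasFDerivAt_const ((0 : Fin d → ℝ), w) p₀)
    have h2 : HasFDerivAt (fun p => w * fderiv ℝ g p ((0 : Fin d → ℝ), 1))
        (w • ((fderiv ℝ g p₀).comp (0 : ((Fin d → ℝ) × ℂ) →L[ℝ] (Fin d → ℝ) × ℂ)
          + D2.flip ((0 : Fin d → ℝ), 1))) p₀ :=
      (hD2.clm_apply (hasFDerivAt_const ((0 : Fin d → ℝ), (1:ℂ)) p₀)).const_mul w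
    have h3 : (fun p => fderiv ℝ g p ((0 : Fin d → ℝ), w))
        =ᶠ[𝓝 p₀] (fun p => w * fderiv ℝ g p ((0 : Fin d → ℝ), 1)) := by
      filter_upwards [hUopen.mem_nhds hU0] with p hp
      exact fact3 p hp w
    have h4 := (h2.congr_of_eventuallyEq h3).unique h1
    have h5 := ContinuousLinearMap.ext_iff.mp h4.symm u
    simpa [smul_eq_mul] using h5
  -- ### Step C : derivatives of b
  have hbd0 : DifferentiableAt ℝ b 0 := hb_diff.differentiableAt (hV₁.mem_nhds hV₁0)
  set A : (Fin d → ℝ) →L[ℝ] ℂ := fderiv ℝ b 0 with hAdef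
  have hbA : HasFDerivAt b A 0 := hbd0.hasFDerivAt
  set Hb := fderiv ℝ (fderiv ℝ b) 0 with hHbdef
  have hHb : HasFDerivAt (fderiv ℝ b) Hb 0 :=
    (hb_diff2.differentiableAt (hV₁.mem_nhds hV₁0)).hasFDerivAt
  set V₂ : Set (Fin d → ℝ) := V₁ ∩ (fun x => (x, b x)) ⁻¹' U with hV₂def
  have hV₂open : IsOpen V₂ :=
    ContinuousOn.isOpen_inter_preimage (continuousOn_id.prodMk hb_diff.continuousOn) hV₁ hUopen
  have h0V₂ : (0 : Fin d → ℝ) ∈ V₂ := ⟨hV₁0, by simp only [Set.mem_preimage, hb0]; exact hU0⟩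
  have hc0' : ∀ x ∈ V₂, ∀ v, fderiv ℝ g (x, b x) (v, fderiv ℝ b x v) = 0 := by
    intro x hx v
    have hbx : HasFDerivAt b (fderiv ℝ b x) x :=
      (hb_diff.differentiableAt (hV₁.mem_nhds hx.1)).hasFDerivAt
    have hφ' : HasFDerivAt (fun y => ((y, b y) : (Fin d → ℝ) × ℂ))
        ((ContinuousLinearMap.id ℝ (Fin d → ℝ)).prod (fderiv ℝ b x)) x :=
      (hasFDerivAt_id x).prodMk hbx
    have hgc : HasFDerivAt (fun y => g (y, b y))
        ((fderiv ℝ g (x, b x)).comp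
          ((ContinuousLinearMap.id ℝ (Fin d → ℝ)).prod (fderiv ℝ b x))) x :=
      (hgdiffAt _ hx.2).hasFDerivAt.comp x hφ'
    have h0 : HasFDerivAt (fun y => g (y, b y)) (0 : (Fin d → ℝ) →L[ℝ] ℂ) x := by
      refine (hasFDerivAt_const (0:ℂ) x).congr_of_eventuallyEq ?_
      filter_upwards [hV₁.mem_nhds hx.1] with y hy
      exact hgb y hy
    have h4 := hgc.unique h0
    have h5 := ContinuousLinearMap.ext_iff.mp h4 v
    simpa using h5
  have hφ00 : ((0 : Fin d → ℝ), b 0) = p₀ := by rw [hb0]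
  have factb1 : ∀ v, A v = fderiv ℝ g p₀ (v, 0) := by
    intro v
    have h1 := hc0' 0 h0V₂ v
    rw [hφ00] at h1
    have h2 : ((v, A v) : (Fin d → ℝ) × ℂ) = (v, 0) + ((0 : Fin d → ℝ), A v) := by simp
    rw [show fderiv ℝ b 0 = A from rfl] at h1
    rw [h2, map_add, gz1 (A v)] at h1
    linear_combination -h1
  have factb2 : ∀ w v, Hb w v = D2 (w, A w) (v, A v) := by
    intro w v
    have hφ'0 : HasFDerivAt (fun y => ((y, b y) : (Fin d → ℝ) × ℂ))
        ((ContinuousLinearMap.id ℝ (Fin d → ℝ)).prod A) 0 :=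
      (hasFDerivAt_id 0).prodMk hbA
    have hD2' : HasFDerivAt (fderiv ℝ g) D2 ((0 : Fin d → ℝ), b 0) := by rw [hφ00]; exact hD2
    have hc : HasFDerivAt (fun x => fderiv ℝ g (x, b x))
        (D2.comp ((ContinuousLinearMap.id ℝ (Fin d → ℝ)).prod A)) 0 :=
      hD2'.comp 0 hφ'0
    have hinner : HasFDerivAt (fun x => fderiv ℝ b x v)
        ((fderiv ℝ b 0).comp (0 : (Fin d → ℝ) →L[ℝ] (Fin d → ℝ)) + Hb.flip v) 0 :=
      hHb.clm_apply (hasFDerivAt_const v 0)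
    have hu : HasFDerivAt (fun x => ((v, fderiv ℝ b x v) : (Fin d → ℝ) × ℂ))
        ((0 : (Fin d → ℝ) →L[ℝ] (Fin d → ℝ)).prod
          ((fderiv ℝ b 0).comp (0 : (Fin d → ℝ) →L[ℝ] (Fin d → ℝ)) + Hb.flip v)) 0 :=
      (hasFDerivAt_const v 0).prodMk hinner
    have hΨ : HasFDerivAt (fun x => fderiv ℝ g (x, b x) (v, fderiv ℝ b x v))
        ((fderiv ℝ g ((0:Fin d → ℝ), b 0)).comp
            ((0 : (Fin d → ℝ) →L[ℝ] (Fin d → ℝ)).prod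
              ((fderiv ℝ b 0).comp (0 : (Fin d → ℝ) →L[ℝ] (Fin d → ℝ)) + Hb.flip v))
          + (D2.comp ((ContinuousLinearMap.id ℝ (Fin d → ℝ)).prod A)).flip
            (v, fderiv ℝ b 0 v)) 0 := hc.clm_apply hu
    have h0 : HasFDerivAt (fun x => fderiv ℝ g (x, b x) (v, fderiv ℝ b x v))
        (0 : (Fin d → ℝ) →L[ℝ] ℂ) 0 := by
      refine (hasFDerivAt_const (0:ℂ) 0).congr_of_eventuallyEq ?_
      filter_upwards [hV₂open.mem_nhds h0V₂] with y hy
      exact hc0' y hy v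
    have h4 := hΨ.unique h0
    have h5 := ContinuousLinearMap.ext_iff.mp h4 w
    rw [hφ00] at h5
    simp only [ContinuousLinearMap.add_apply, ContinuousLinearMap.coe_comp', Function.comp_apply,
      ContinuousLinearMap.zero_apply, ContinuousLinearMap.comp_zero, zero_add,
      ContinuousLinearMap.prod_apply, ContinuousLinearMap.flip_apply,
      ContinuousLinearMap.coe_id', id_eq, map_zero] at h5
    rw [gz1] at h5
    linear_combination -h5
  -- ### Step D : the second derivative of b in coordinates
  have hcj : ∀ j, A (Pi.single j 1) = -(Complex.I * μ j) := by
    intro j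
    rw [factb1, hμ j, ← mul_assoc, Complex.I_mul_I]
    ring
  have hsplit : ∀ (a : Fin d → ℝ) (c : ℂ),
      ((a, c) : (Fin d → ℝ) × ℂ) = (a, 0) + ((0 : Fin d → ℝ), c) := by
    intro a c; simp
  have hHjk : ∀ j k, Hb (Pi.single j 1) (Pi.single k 1) = Sig j k - μ j * μ k := by
    intro j k
    rw [factb2, hcj j, hcj k]
    rw [hsplit (Pi.single j 1) (-(Complex.I * μ j)), hsplit (Pi.single k 1) (-(Complex.I * μ k))]
    have expand : ∀ (u1 u2 v1 v2 : (Fin d → ℝ) × ℂ), D2 (u1 + u2) (v1 + v2)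
        = D2 u1 v1 + D2 u1 v2 + D2 u2 v1 + D2 u2 v2 := by
      intro u1 u2 v1 v2
      simp only [map_add, ContinuousLinearMap.add_apply]
      abel
    rw [expand]
    have e12 : D2 (Pi.single j 1, 0) ((0 : Fin d → ℝ), -(Complex.I * μ k))
        = -(Complex.I * μ k) * D2 (Pi.single j 1, 0) ((0 : Fin d → ℝ), 1) := fact4 _ _
    have e21 : D2 ((0 : Fin d → ℝ), -(Complex.I * μ j)) (Pi.single k 1, 0)
        = -(Complex.I * μ j) * D2 (Pi.single k 1, 0) ((0 : Fin d → ℝ), 1) := by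
      rw [fact5]; exact fact4 _ _
    have e22 : D2 ((0 : Fin d → ℝ), -(Complex.I * μ j)) ((0 : Fin d → ℝ), -(Complex.I * μ k))
        = 0 := by
      rw [fact4, fact5, fact4, fact2]
      ring
    rw [e12, e21, e22, hSig j k]
    have hpd : ∀ u w, pd2 g ((0:Fin d → ℝ), (1:ℂ)) u w = D2 u w := fun u w => rfl
    rw [hpd, hpd, hpd]
    ring
  -- ### Step E : assembling the little-o statement
  -- coordinate expansions
  have hAx : ∀ x : Fin d → ℝ, A x = -(Complex.I * ∑ j, μ j * (x j : ℂ)) := by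
    intro x
    rw [clm_pi_apply A x]
    have hterm : ∀ j : Fin d, x j • (A (Pi.single j 1)) = -(Complex.I * (μ j * ((x j : ℝ) : ℂ)))
        := by
      intro j
      rw [hcj j, Complex.real_smul]
      ring
    rw [Finset.sum_congr rfl fun j _ => hterm j, Finset.mul_sum, ← Finset.sum_neg_distrib]
  have hHxx : ∀ x : Fin d → ℝ, Hb x x
      = (∑ j, ∑ k, Sig j k * (x j : ℂ) * (x k : ℂ)) - (∑ j, μ j * (x j : ℂ))^2 := by
    intro x
    have h1 : Hb x x = ∑ j, x j • (Hb (Pi.single j 1) x) := by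
      rw [clm_pi_apply Hb x]
      simp
    have h2 : ∀ j, Hb (Pi.single j 1) x = ∑ k, x k • (Sig j k - μ j * μ k) := by
      intro j
      rw [clm_pi_apply (Hb (Pi.single j 1)) x]
      simp [hHjk]
    rw [h1, Finset.sum_congr rfl fun j _ => by rw [h2 j]]
    rw [pow_two, Finset.sum_mul_sum, ← Finset.sum_sub_distrib]
    refine Finset.sum_congr rfl fun j _ => ?_
    rw [Finset.smul_sum, ← Finset.sum_sub_distrib]
    refine Finset.sum_congr rfl fun k _ => ?_
    rw [Complex.real_smul, Complex.real_smul]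
    ring
  -- asymptotics of b near 0
  have htay : (fun x => b x - 1 - A x - (1/2:ℝ) • Hb x x) =o[𝓝 (0 : Fin d → ℝ)]
      (fun x => ‖x‖ ^ 2) := by
    have := taylor2_peano hV₁ hV₁0 hb_diff (hb_diff2.differentiableAt (hV₁.mem_nhds hV₁0))
    simpa [hb0] using this
  have hob : (fun x => b x - 1 - A x) =o[𝓝 (0 : Fin d → ℝ)] (fun x => ‖x‖) := by
    have h := hbA.isLittleO
    rw [Asymptotics.isLittleO_norm_right]
    simpa [hb0] using h
  have hAO : (fun x : Fin d → ℝ => A x) =O[𝓝 (0 : Fin d → ℝ)] (fun x => ‖x‖) := by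
    rw [Asymptotics.isBigO_norm_right]
    exact A.isBigO_comp _ _
  have huO : (fun x : Fin d → ℝ => b x - 1) =O[𝓝 (0 : Fin d → ℝ)] (fun x => ‖x‖) := by
    have := hob.isBigO.add hAO
    simpa using this
  have hu0 : Filter.Tendsto (fun x : Fin d → ℝ => b x - 1) (𝓝 0) (𝓝 0) := by
    have := hbd0.continuousAt.tendsto
    rw [hb0] at this
    simpa using this.sub (tendsto_const_nhds (x := (1:ℂ)))
  -- T3
  have hT3 : (fun x : Fin d → ℝ => (1/2 : ℂ) * ((A x)^2 - (b x - 1)^2))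
      =o[𝓝 (0 : Fin d → ℝ)] (fun x => ‖x‖ ^ 2) := by
    have h1 : (fun x : Fin d → ℝ => A x - (b x - 1)) =o[𝓝 (0 : Fin d → ℝ)] (fun x => ‖x‖) := by
      have := hob.neg_left
      refine this.congr' (Filter.Eventually.of_forall fun x => ?_) (by rfl)
      ring
    have h2 : (fun x : Fin d → ℝ => A x + (b x - 1)) =O[𝓝 (0 : Fin d → ℝ)] (fun x => ‖x‖) :=
      hAO.add huO
    have h3 := (h1.mul_isBigO h2).const_mul_left (1/2 : ℂ)
    refine h3.congr' (Filter.Eventually.of_forall fun x => ?_)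
      (Filter.Eventually.of_forall fun x => ?_)
    · ring
    · simp [pow_two]
  -- T1
  have hT1 : (fun x : Fin d → ℝ =>
        Complex.log (1 + (b x - 1)) - Complex.logTaylor 3 (b x - 1))
      =o[𝓝 (0 : Fin d → ℝ)] (fun x => ‖x‖ ^ 2) := by
    have hsmall : ∀ᶠ x : Fin d → ℝ in 𝓝 0, ‖b x - 1‖ ≤ 1/2 := by
      have := Metric.tendsto_nhds.mp hu0 (1/2) (by norm_num)
      filter_upwards [this] with x hx
      rw [dist_zero_right] at hx
      exact hx.le
    have hbig : (fun x : Fin d → ℝ =>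
        Complex.log (1 + (b x - 1)) - Complex.logTaylor 3 (b x - 1))
        =O[𝓝 (0 : Fin d → ℝ)] (fun x => ‖b x - 1‖^3) := by
      rw [Asymptotics.isBigO_iff]
      refine ⟨1, ?_⟩
      filter_upwards [hsmall] with x hx
      have hlt : ‖b x - 1‖ < 1 := lt_of_le_of_lt hx (by norm_num)
      have hle := Complex.norm_log_sub_logTaylor_le 2 hlt
      have h2 : ‖b x - 1‖ ^ (2+1) * (1 - ‖b x - 1‖)⁻¹ / (2+1) ≤ ‖b x - 1‖^3 := by
        have hn : (0:ℝ) ≤ ‖b x - 1‖^3 := by positivity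
        have hinv : (1 - ‖b x - 1‖)⁻¹ ≤ 2 := by
          rw [inv_le_comm₀ (by linarith) (by norm_num)]
          linarith
        calc ‖b x - 1‖ ^ (2+1) * (1 - ‖b x - 1‖)⁻¹ / (2+1)
            ≤ ‖b x - 1‖ ^ 3 * 2 / 3 := by
              gcongr
              norm_num
          _ ≤ ‖b x - 1‖^3 := by linarith
      calc ‖Complex.log (1 + (b x - 1)) - Complex.logTaylor 3 (b x - 1)‖
          ≤ ‖b x - 1‖ ^ (2+1) * (1 - ‖b x - 1‖)⁻¹ / (2+1) := by exact_mod_cast hle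
        _ ≤ ‖b x - 1‖^3 := h2
        _ ≤ 1 * ‖‖b x - 1‖^3‖ := by
            rw [one_mul, Real.norm_eq_abs, _root_.abs_of_nonneg (by positivity : (0:ℝ) ≤ ‖b x - 1‖^3)]
    have hcube : (fun x : Fin d → ℝ => ‖b x - 1‖^3) =o[𝓝 (0 : Fin d → ℝ)]
        (fun x => ‖x‖ ^ 2) := by
      have hsm : (fun x : Fin d → ℝ => ‖b x - 1‖) =o[𝓝 (0 : Fin d → ℝ)]
          (fun _ => (1:ℝ)) := by
        rw [Asymptotics.isLittleO_one_iff]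
        simpa using hu0.norm
      have hsq : (fun x : Fin d → ℝ => ‖b x - 1‖^2) =O[𝓝 (0 : Fin d → ℝ)]
          (fun x => ‖x‖ ^ 2) := by
        have := (huO.norm_left).pow 2
        simpa using this
      have := hsm.mul_isBigO hsq
      refine this.congr' (Filter.Eventually.of_forall fun x => ?_)
        (Filter.Eventually.of_forall fun x => ?_)
      · ring
      · ring
    exact hbig.trans_isLittleO hcube
  -- assemble
  have htotal := (hT1.add htay).add hT3
  refine htotal.congr' (Filter.Eventually.of_forall fun x => ?_) (by rfl)
  have hbx : 1 + (b x - 1) = b x := by ring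
  dsimp only
  rw [hbx, logTaylor_three, hAx x, hHxx x]
  have hsmul : (1/2:ℝ) • ((∑ j, ∑ k, Sig j k * (x j : ℂ) * (x k : ℂ))
      - (∑ j, μ j * (x j : ℂ))^2)
      = (1/2:ℂ) * ((∑ j, ∑ k, Sig j k * (x j : ℂ) * (x k : ℂ))
      - (∑ j, μ j * (x j : ℂ))^2) := by
    rw [Complex.real_smul]
    norm_num
  rw [hsmul]
  linear_combination ((∑ j, μ j * (x j : ℂ))^2/2) * Complex.I_sq
end

section
/- Under the standing hypotheses, let b be the twice differentiable function near 0 ∈ ℝ^d with b(0)=1 and g(x,b(x))=0 (given by the implicit function theorem applied to g at (0,1)). Then for every fixed ω ∈ ℝ^d, lim_{n→∞} (b(ω/√n))^n · exp(i⟨μ,ω⟩√n) = exp((1/2)⟨ω, Σω⟩). -/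
open MeasureTheory ProbabilityTheory Complex Filter Topology Metric

section Aux

open Asymptotics Set


theorem taylor2_aux {E F : Type*} [NormedAddCommGroup E] [NormedSpace ℝ E]
    [NormedAddCommGroup F] [NormedSpace ℝ F] {f : E → F} {s : Set E}
    (hs : IsOpen s) (h0 : (0:E) ∈ s)
    (hf : DifferentiableOn ℝ f s) (hf2 : DifferentiableOn ℝ (fderiv ℝ f) s) :
    (fun h => f h - f 0 - fderiv ℝ f 0 h - (1/2 : ℝ) • fderiv ℝ (fderiv ℝ f) 0 h h)
      =o[𝓝 0] fun h => ‖h‖ ^ 2 := by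
  have hfa : ∀ x ∈ s, HasFDerivAt f (fderiv ℝ f x) x := fun x hx =>
    (hf.differentiableAt (hs.mem_nhds hx)).hasFDerivAt
  set D := fderiv ℝ (fderiv ℝ f) 0 with hDdef
  have hD0 : HasFDerivAt (fderiv ℝ f) D 0 :=
    (hf2.differentiableAt (hs.mem_nhds h0)).hasFDerivAt
  have hsym : ∀ v w, D v w = D w v :=
    second_derivative_symmetric_of_eventually_of_real
      (by filter_upwards [hs.mem_nhds h0] with y hy using hfa y hy) hD0
  set R : E → F := fun h => f h - f 0 - fderiv ℝ f 0 h - (1/2:ℝ) • D h h with hRdef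
  have hRd : ∀ x ∈ s, HasFDerivAt R (fderiv ℝ f x - fderiv ℝ f 0 - D x) x := by
    intro x hx
    have hb : HasFDerivAt (fun h => D h h) (D x + D.flip x) x := by
      have h1 := (D.isBoundedBilinearMap).hasFDerivAt (x, x)
      have h2 : HasFDerivAt (fun h : E => ((h, h) : E × E))
          ((ContinuousLinearMap.id ℝ E).prod (ContinuousLinearMap.id ℝ E)) x :=
        (hasFDerivAt_id x).prodMk (hasFDerivAt_id x)
      have h3 := HasFDerivAt.comp (g := fun p : E × E => D p.1 p.2)
        (f := fun h : E => ((h, h) : E × E)) x h1 h2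
      refine h3.congr_fderiv ?_
      ext v
      simp [IsBoundedBilinearMap.deriv_apply]
    have h4 : HasFDerivAt R
        (fderiv ℝ f x - 0 - fderiv ℝ f 0 - (1/2:ℝ) • (D x + D.flip x)) x := by
      exact (((hfa x hx).sub (hasFDerivAt_const (f 0) x)).sub
        ((fderiv ℝ f 0).hasFDerivAt)).sub (hb.const_smul (1/2:ℝ))
    have heq : fderiv ℝ f x - 0 - fderiv ℝ f 0 - (1/2:ℝ) • (D x + D.flip x)
        = fderiv ℝ f x - fderiv ℝ f 0 - D x := by
      ext v
      simp only [ContinuousLinearMap.coe_smul', Pi.smul_apply, ContinuousLinearMap.add_apply,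
        ContinuousLinearMap.coe_sub', Pi.sub_apply, ContinuousLinearMap.flip_apply,
        ContinuousLinearMap.zero_apply, smul_add]
      rw [hsym v x]
      module
    rw [heq] at h4
    exact h4
  rw [isLittleO_iff]
  intro ε hε
  have hd : (fun y => fderiv ℝ f y - fderiv ℝ f 0 - D y) =o[𝓝 0] fun y => y := by
    have := hasFDerivAt_iff_isLittleO_nhds_zero.mp hD0
    simpa using this
  rw [isLittleO_iff] at hd
  have hev := hd hε
  rw [Metric.eventually_nhds_iff_ball] at hev ⊢
  obtain ⟨δ₁, hδ₁, hb₁⟩ := hev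
  obtain ⟨δ₂, hδ₂, hb₂⟩ := Metric.mem_nhds_iff.mp (hs.mem_nhds h0)
  refine ⟨min δ₁ δ₂, lt_min hδ₁ hδ₂, fun h hh => ?_⟩
  have hh1 : ‖h‖ < δ₁ := by
    have := mem_ball_zero_iff.mp hh; exact lt_of_lt_of_le this (min_le_left _ _)
  have hh2 : ‖h‖ < δ₂ := by
    have := mem_ball_zero_iff.mp hh; exact lt_of_lt_of_le this (min_le_right _ _)
  set t : Set E := Metric.closedBall 0 ‖h‖ with htdef
  have hts : t ⊆ s := fun y hy => hb₂ (by
    have : ‖y‖ ≤ ‖h‖ := mem_closedBall_zero_iff.mp hy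
    exact mem_ball_zero_iff.mpr (lt_of_le_of_lt this hh2))
  have hders : ∀ y ∈ t, HasFDerivWithinAt R (fderiv ℝ f y - fderiv ℝ f 0 - D y) t y :=
    fun y hy => (hRd y (hts hy)).hasFDerivWithinAt
  have hbound : ∀ y ∈ t, ‖fderiv ℝ f y - fderiv ℝ f 0 - D y‖ ≤ ε * ‖h‖ := by
    intro y hy
    have hyn : ‖y‖ ≤ ‖h‖ := mem_closedBall_zero_iff.mp hy
    have := hb₁ y (mem_ball_zero_iff.mpr (lt_of_le_of_lt hyn hh1))
    calc ‖fderiv ℝ f y - fderiv ℝ f 0 - D y‖ ≤ ε * ‖y‖ := this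
      _ ≤ ε * ‖h‖ := by exact mul_le_mul_of_nonneg_left hyn hε.le
  have hmvt := (convex_closedBall (0:E) ‖h‖).norm_image_sub_le_of_norm_hasFDerivWithin_le
    hders hbound (Metric.mem_closedBall_self (norm_nonneg h)) (mem_closedBall_zero_iff.mpr le_rfl)
  have hR0 : R 0 = 0 := by simp [hRdef]
  rw [hR0] at hmvt
  calc ‖R h‖ = ‖R h - 0‖ := by rw [sub_zero]
    _ ≤ ε * ‖h‖ * ‖h - 0‖ := hmvt
    _ = ε * ‖h‖ ^ 2 := by rw [sub_zero]; ring
    _ ≤ ε * ‖(‖h‖ ^ 2 : ℝ)‖ := by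
        rw [Real.norm_eq_abs, _root_.abs_of_nonneg (by positivity : (0:ℝ) ≤ ‖h‖ ^ 2)]


theorem radial_deriv' {F : ℂ → ℂ} {A : ℂ →L[ℝ] ℂ} {c c' : ℂ} (hF : HasFDerivAt F A 1)
    (hval : ∀ t : ℝ, t ∈ Set.Icc (0:ℝ) 1 → F (1 - (t:ℂ)) = c + c' * t) : A 1 = -c' := by
  have hin : HasDerivAt (fun t : ℝ => (1:ℂ) - (t:ℂ)) (-1) 0 := by
    have h1 : HasDerivAt (fun t : ℝ => ((t:ℝ):ℂ)) 1 0 := by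
      exact Complex.ofRealCLM.hasDerivAt (x := (0:ℝ))
    exact h1.const_sub (1:ℂ)
  have hG : HasDerivAt (fun t : ℝ => F (1 - (t:ℂ))) (-(A 1)) 0 := by
    have hcomp := hF.comp_hasDerivAt_of_eq (0:ℝ) hin (by norm_num)
    have : A (-1) = -(A 1) := by rw [← A.map_neg]
    rw [← this]
    simpa [Function.comp_def] using hcomp
  have hGw : HasDerivWithinAt (fun t : ℝ => F (1 - (t:ℂ))) (-(A 1)) (Ici (0:ℝ)) 0 :=
    hG.hasDerivWithinAt
  have hlin : HasDerivWithinAt (fun t : ℝ => c + c' * (t:ℂ)) c' (Ici (0:ℝ)) 0 := by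
    have h1 : HasDerivAt (fun t : ℝ => ((t:ℝ):ℂ)) 1 0 := by
      exact Complex.ofRealCLM.hasDerivAt (x := (0:ℝ))
    have h2 := (h1.const_mul c').const_add c
    simpa using h2.hasDerivWithinAt
  have hev : (fun t : ℝ => c + c' * (t:ℂ)) =ᶠ[𝓝[Ici (0:ℝ)] 0] (fun t : ℝ => F (1 - (t:ℂ))) := by
    have h1 : Iio (1:ℝ) ∈ 𝓝[Ici (0:ℝ)] (0:ℝ) := nhdsWithin_le_nhds (Iio_mem_nhds one_pos)
    filter_upwards [h1, self_mem_nhdsWithin] with t ht1 ht0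
    exact (hval t ⟨ht0, le_of_lt ht1⟩).symm
  have hGw' : HasDerivWithinAt (fun t : ℝ => c + c' * (t:ℂ)) (-(A 1)) (Ici (0:ℝ)) 0 :=
    hGw.congr_of_eventuallyEq hev (by simpa using (hval 0 (by norm_num)).symm)
  have huniq := (uniqueDiffOn_Ici (0:ℝ) 0 self_mem_Ici).eq hGw'.hasFDerivWithinAt
    hlin.hasFDerivWithinAt
  have h1 := congrArg (fun f : ℝ →L[ℝ] ℂ => f 1) huniq
  simp only [ContinuousLinearMap.smulRight_apply, ContinuousLinearMap.one_apply,
    ContinuousLinearMap.toSpanSingleton_apply, one_smul] at h1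
  exact neg_eq_iff_eq_neg.mp h1

set_option maxHeartbeats 1000000 in
theorem deriv_facts {d : ℕ}
    (U : Set ((Fin d → ℝ) × ℂ)) (hUopen : IsOpen U)
    (hUnhd : ∀ z : ℂ, ‖z‖ ≤ 1 → ((0 : Fin d → ℝ), z) ∈ U)
    (g : (Fin d → ℝ) × ℂ → ℂ)
    (hg_holo : ∀ x : Fin d → ℝ, DifferentiableOn ℂ (fun z => g (x, z)) {z | (x, z) ∈ U})
    (hg_diff : DifferentiableOn ℝ g U)
    (hg_diff2 : DifferentiableOn ℝ (fderiv ℝ g) U)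
    (hg0 : ∀ z : ℂ, ‖z‖ < 1 → g (0, z) = 1 - z)
    (V₁ : Set (Fin d → ℝ)) (hV₁ : IsOpen V₁) (hV₁0 : (0 : Fin d → ℝ) ∈ V₁)
    (b : (Fin d → ℝ) → ℂ)
    (hb_diff : DifferentiableOn ℝ b V₁) (hb_diff2 : DifferentiableOn ℝ (fderiv ℝ b) V₁)
    (hb0 : b 0 = 1) (hgb : ∀ x ∈ V₁, g (x, b x) = 0)
    (μ : Fin d → ℂ)
    (hμ : ∀ j, μ j = Complex.I * fderiv ℝ g (0, 1) (Pi.single j 1, 0)) :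
    (∀ j, fderiv ℝ b 0 (Pi.single j 1) = -(Complex.I * μ j)) ∧
    (∀ j k, fderiv ℝ (fderiv ℝ b) 0 (Pi.single j 1) (Pi.single k 1)
      = fderiv ℝ (fderiv ℝ g) (0,1) (Pi.single j 1, 0) (Pi.single k 1, 0)
        - Complex.I * (μ j * fderiv ℝ (fderiv ℝ g) (0,1) (Pi.single k 1, 0) ((0:Fin d → ℝ), (1:ℂ))
          + μ k * fderiv ℝ (fderiv ℝ g) (0,1) (Pi.single j 1, 0) ((0:Fin d → ℝ), (1:ℂ)))) ∧
    ((fun h => b h - 1 - fderiv ℝ b 0 h - (1/2:ℝ) • fderiv ℝ (fderiv ℝ b) 0 h h)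
      =o[𝓝 0] fun h => ‖h‖^2) := by
  classical
  have hp0U : ((0 : Fin d → ℝ), (1:ℂ)) ∈ U := hUnhd 1 (by norm_num)
  have hgd : ∀ p ∈ U, DifferentiableAt ℝ g p := fun p hp =>
    hg_diff.differentiableAt (hUopen.mem_nhds hp)
  have hgd2 : ∀ p ∈ U, DifferentiableAt ℝ (fderiv ℝ g) p := fun p hp =>
    hg_diff2.differentiableAt (hUopen.mem_nhds hp)
  set L : (Fin d → ℝ) × ℂ →L[ℝ] ℂ := fderiv ℝ g ((0 : Fin d → ℝ), (1:ℂ)) with hLdef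
  set D2 := fderiv ℝ (fderiv ℝ g) ((0 : Fin d → ℝ), (1:ℂ)) with hD2def
  have hLd : HasFDerivAt g L ((0 : Fin d → ℝ), (1:ℂ)) := (hgd _ hp0U).hasFDerivAt
  have hD2d : HasFDerivAt (fderiv ℝ g) D2 ((0 : Fin d → ℝ), (1:ℂ)) := (hgd2 _ hp0U).hasFDerivAt
  have hDsym : ∀ v w, D2 v w = D2 w v :=
    second_derivative_symmetric_of_eventually_of_real
      (by filter_upwards [hUopen.mem_nhds hp0U] with q hq using (hgd q hq).hasFDerivAt) hD2d
  set ι : ℂ →L[ℝ] (Fin d → ℝ) × ℂ :=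
    (0 : ℂ →L[ℝ] (Fin d → ℝ)).prod (ContinuousLinearMap.id ℝ ℂ) with hιdef
  have hιapp : ∀ c : ℂ, ι c = ((0 : Fin d → ℝ), c) := fun c => by
    simp [hιdef]
  -- slice derivatives
  have hslice : ∀ p : (Fin d → ℝ) × ℂ, p ∈ U →
      HasFDerivAt (fun z => g (p.1, z)) ((fderiv ℝ g p).comp ι) p.2 := by
    intro p hp
    have hins : HasFDerivAt (fun z : ℂ => ((p.1, z) : (Fin d → ℝ) × ℂ)) ι p.2 :=
      (hasFDerivAt_const p.1 p.2).prodMk (hasFDerivAt_id p.2)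
    have h2 : HasFDerivAt g (fderiv ℝ g p) (p.1, p.2) := by
      have := (hgd p hp).hasFDerivAt
      simpa using this
    exact h2.comp p.2 hins
  -- complex linearity in the z-direction
  have hlin : ∀ p ∈ U, ∀ c : ℂ,
      fderiv ℝ g p ((0 : Fin d → ℝ), c) = c * fderiv ℝ g p ((0 : Fin d → ℝ), 1) := by
    intro p hp c
    have hopen : IsOpen {z : ℂ | (p.1, z) ∈ U} :=
      hUopen.preimage (Continuous.prodMk_right p.1)
    have hzmem : p.2 ∈ {z : ℂ | (p.1, z) ∈ U} := by
      show (p.1, p.2) ∈ U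
      simpa using hp
    have hhol : DifferentiableAt ℂ (fun z => g (p.1, z)) p.2 :=
      (hg_holo p.1).differentiableAt (hopen.mem_nhds hzmem)
    have hC : HasFDerivAt (fun z => g (p.1, z))
        ((fderiv ℂ (fun z => g (p.1, z)) p.2).restrictScalars ℝ) p.2 :=
      (hhol.hasFDerivAt).restrictScalars ℝ
    have huniq : (fderiv ℝ g p).comp ι
        = (fderiv ℂ (fun z => g (p.1, z)) p.2).restrictScalars ℝ := (hslice p hp).unique hC
    have e1 : ∀ y : ℂ, fderiv ℝ g p ((0 : Fin d → ℝ), y)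
        = fderiv ℂ (fun z => g (p.1, z)) p.2 y := by
      intro y
      have h3 := congrArg (fun f : ℂ →L[ℝ] ℂ => f y) huniq
      simpa [hιapp] using h3
    rw [e1 c, e1 1]
    calc fderiv ℂ (fun z => g (p.1, z)) p.2 c
        = fderiv ℂ (fun z => g (p.1, z)) p.2 (c • (1:ℂ)) := by rw [smul_eq_mul, mul_one]
      _ = c • fderiv ℂ (fun z => g (p.1, z)) p.2 1 :=
          (fderiv ℂ (fun z => g (p.1, z)) p.2).map_smul c 1
      _ = c * fderiv ℂ (fun z => g (p.1, z)) p.2 1 := by rw [smul_eq_mul]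
  -- value at the corner
  have hg01 : g ((0 : Fin d → ℝ), (1:ℂ)) = 0 := by
    have hcont : ContinuousAt g ((0 : Fin d → ℝ), (1:ℂ)) := (hgd _ hp0U).continuousAt
    have hpath : Tendsto (fun t : ℝ => (((0:Fin d → ℝ), 1 - (t:ℂ)) : (Fin d → ℝ) × ℂ))
        (𝓝[>] (0:ℝ)) (𝓝 ((0 : Fin d → ℝ), (1:ℂ))) := by
      have hc : Continuous (fun t : ℝ => (((0:Fin d → ℝ), 1 - (t:ℂ)) : (Fin d → ℝ) × ℂ)) := by
        continuity
      have h0 := hc.tendsto 0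
      simpa using h0.mono_left nhdsWithin_le_nhds
    have h1 := hcont.tendsto.comp hpath
    have h2 : Tendsto (fun t : ℝ => ((t:ℝ):ℂ)) (𝓝[>] (0:ℝ)) (𝓝 0) := by
      have h0 := Complex.continuous_ofReal.tendsto 0
      simpa using h0.mono_left nhdsWithin_le_nhds
    have h3 : (fun t : ℝ => g ((0:Fin d → ℝ), 1 - (t:ℂ)))
        =ᶠ[𝓝[>] (0:ℝ)] fun t : ℝ => ((t:ℝ):ℂ) := by
      have hm : Ioo (0:ℝ) 1 ∈ 𝓝[>] (0:ℝ) :=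
        Ioo_mem_nhdsGT_of_mem (by norm_num : (0:ℝ) ∈ Ico (0:ℝ) 1)
      filter_upwards [hm] with t ht
      have hnorm : ‖(1:ℂ) - (t:ℂ)‖ < 1 := by
        rw [show (1:ℂ) - (t:ℂ) = ((1 - t : ℝ):ℂ) by push_cast; ring, Complex.norm_real,
          Real.norm_eq_abs, _root_.abs_of_nonneg (by linarith [ht.2] : (0:ℝ) ≤ 1 - t)]
        linarith [ht.1]
      rw [hg0 _ hnorm]
      push_cast; ring
    exact tendsto_nhds_unique (h1.congr' h3) h2
  -- interior slice derivative values
  have hslice_val : ∀ z : ℂ, ‖z‖ < 1 →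
      fderiv ℝ g ((0 : Fin d → ℝ), z) ((0 : Fin d → ℝ), 1) = -1 := by
    intro z hz
    have hmem : ((0 : Fin d → ℝ), z) ∈ U := hUnhd z (le_of_lt hz)
    have h1 := hslice _ hmem
    have h2 : HasFDerivAt (fun w : ℂ => (1:ℂ) - w)
        (-(ContinuousLinearMap.id ℝ ℂ)) z := by
      have hid : HasFDerivAt (fun w : ℂ => w) (ContinuousLinearMap.id ℝ ℂ) z :=
        hasFDerivAt_id z
      exact hid.const_sub (1:ℂ)
    have hev : (fun w : ℂ => g ((0 : Fin d → ℝ), w)) =ᶠ[𝓝 z] (fun w => 1 - w) := by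
      have hb : Metric.ball (0:ℂ) 1 ∈ 𝓝 z := Metric.isOpen_ball.mem_nhds (by simpa using hz)
      filter_upwards [hb] with w hw
      exact hg0 w (by simpa using hw)
    have h3 : HasFDerivAt (fun w : ℂ => g ((0 : Fin d → ℝ), w))
        (-(ContinuousLinearMap.id ℝ ℂ)) z := h2.congr_of_eventuallyEq hev
    have h4 := h1.unique h3
    have h5 := congrArg (fun f : ℂ →L[ℝ] ℂ => f 1) h4
    simpa [hιapp] using h5
  have hL01 : L ((0 : Fin d → ℝ), (1:ℂ)) = -1 := by
    have hF := hslice _ hp0U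
    have hval : ∀ t : ℝ, t ∈ Set.Icc (0:ℝ) 1 →
        g ((0:Fin d → ℝ), 1 - (t:ℂ)) = 0 + 1 * t := by
      intro t ht
      rcases eq_or_lt_of_le ht.1 with h|h
      · rw [← h]
        simpa using hg01
      · have hnorm : ‖(1:ℂ) - (t:ℂ)‖ < 1 := by
          rw [show (1:ℂ) - (t:ℂ) = ((1 - t : ℝ):ℂ) by push_cast; ring, Complex.norm_real,
            Real.norm_eq_abs, _root_.abs_of_nonneg (by linarith [ht.2] : (0:ℝ) ≤ 1 - t)]
          linarith
        rw [hg0 _ hnorm]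
        push_cast; ring
    have hrad := radial_deriv' hF hval
    have : (L.comp ι) 1 = L ((0 : Fin d → ℝ), (1:ℂ)) := by simp [hιapp]
    rw [this] at hrad
    simpa using hrad
  have hD211 : D2 ((0 : Fin d → ℝ), (1:ℂ)) ((0 : Fin d → ℝ), (1:ℂ)) = 0 := by
    have hins : HasFDerivAt (fun z : ℂ => (((0:Fin d → ℝ), z) : (Fin d → ℝ) × ℂ)) ι 1 :=
      (hasFDerivAt_const _ _).prodMk (hasFDerivAt_id 1)
    have hD2comp : HasFDerivAt (fun z : ℂ => fderiv ℝ g ((0:Fin d → ℝ), z)) (D2.comp ι) 1 :=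
      hD2d.comp 1 hins
    have hF : HasFDerivAt
        (fun z : ℂ => fderiv ℝ g ((0:Fin d → ℝ), z) (((0:Fin d → ℝ), (1:ℂ))))
        ((fderiv ℝ g ((0:Fin d → ℝ), (1:ℂ))).comp (0 : ℂ →L[ℝ] ((Fin d → ℝ) × ℂ))
          + (D2.comp ι).flip (((0:Fin d → ℝ), (1:ℂ)))) 1 := by
      have h0 := hD2comp.clm_apply
        (hasFDerivAt_const ((((0:Fin d → ℝ), (1:ℂ))) : (Fin d → ℝ) × ℂ) (1:ℂ))
      exact h0
    have hval : ∀ t : ℝ, t ∈ Set.Icc (0:ℝ) 1 →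
        fderiv ℝ g ((0:Fin d → ℝ), 1 - (t:ℂ)) (((0:Fin d → ℝ), (1:ℂ))) = -1 + 0 * t := by
      intro t ht
      rcases eq_or_lt_of_le ht.1 with h|h
      · rw [← h]
        simpa using hL01
      · have hnorm : ‖(1:ℂ) - (t:ℂ)‖ < 1 := by
          rw [show (1:ℂ) - (t:ℂ) = ((1 - t : ℝ):ℂ) by push_cast; ring, Complex.norm_real,
            Real.norm_eq_abs, _root_.abs_of_nonneg (by linarith [ht.2] : (0:ℝ) ≤ 1 - t)]
          linarith
        rw [hslice_val _ hnorm]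
        ring
    have hrad := radial_deriv' hF hval
    rw [neg_zero] at hrad
    have he : (((fderiv ℝ g ((0:Fin d → ℝ), (1:ℂ))).comp (0 : ℂ →L[ℝ] ((Fin d → ℝ) × ℂ))
          + (D2.comp ι).flip (((0:Fin d → ℝ), (1:ℂ)))) 1)
        = D2 ((0 : Fin d → ℝ), (1:ℂ)) ((0 : Fin d → ℝ), (1:ℂ)) := by
      simp [ContinuousLinearMap.flip_apply, hιapp]
    rw [he] at hrad
    exact hrad
  have hD2lin : ∀ (V : (Fin d → ℝ) × ℂ) (c : ℂ),
      D2 V ((0 : Fin d → ℝ), c) = c * D2 V ((0 : Fin d → ℝ), 1) := by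
    intro V c
    have hev1 : HasFDerivAt (fun q => fderiv ℝ g q ((0:Fin d → ℝ), c))
        ((fderiv ℝ g ((0:Fin d → ℝ), (1:ℂ))).comp
            (0 : ((Fin d → ℝ) × ℂ) →L[ℝ] ((Fin d → ℝ) × ℂ))
          + D2.flip (((0:Fin d → ℝ), c)))
        ((0:Fin d → ℝ), (1:ℂ)) := by
      have h0 := hD2d.clm_apply
        (hasFDerivAt_const ((((0:Fin d → ℝ), c)) : (Fin d → ℝ) × ℂ)
          ((((0:Fin d → ℝ), (1:ℂ))) : (Fin d → ℝ) × ℂ))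
      simpa using h0
    have hev2 : HasFDerivAt (fun q => fderiv ℝ g q ((0:Fin d → ℝ), 1))
        ((fderiv ℝ g ((0:Fin d → ℝ), (1:ℂ))).comp
            (0 : ((Fin d → ℝ) × ℂ) →L[ℝ] ((Fin d → ℝ) × ℂ))
          + D2.flip (((0:Fin d → ℝ), (1:ℂ))))
        ((0:Fin d → ℝ), (1:ℂ)) := by
      have h0 := hD2d.clm_apply
        (hasFDerivAt_const ((((0:Fin d → ℝ), (1:ℂ))) : (Fin d → ℝ) × ℂ)
          ((((0:Fin d → ℝ), (1:ℂ))) : (Fin d → ℝ) × ℂ))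
      simpa using h0
    have hev3 := hev2.const_mul c
    have heq : (fun q => fderiv ℝ g q ((0:Fin d → ℝ), c))
        =ᶠ[𝓝 (((0:Fin d → ℝ), (1:ℂ)) : (Fin d → ℝ) × ℂ)]
        (fun q => c * fderiv ℝ g q ((0:Fin d → ℝ), 1)) := by
      filter_upwards [hUopen.mem_nhds hp0U] with q hq using hlin q hq c
    have h4 := (hev3.congr_of_eventuallyEq heq).unique hev1
    have h5 := congrArg (fun f : ((Fin d → ℝ) × ℂ) →L[ℝ] ℂ => f V) h4
    simpa using h5.symm
    -- ============ the implicit function part ============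
  have hbV : ∀ x ∈ V₁, DifferentiableAt ℝ b x := fun x hx =>
    hb_diff.differentiableAt (hV₁.mem_nhds hx)
  have hbV2 : ∀ x ∈ V₁, DifferentiableAt ℝ (fderiv ℝ b) x := fun x hx =>
    hb_diff2.differentiableAt (hV₁.mem_nhds hx)
  have hmcont : ContinuousOn (fun x => ((x, b x) : (Fin d → ℝ) × ℂ)) V₁ :=
    (continuous_id.continuousOn).prodMk hb_diff.continuousOn
  set V₂ : Set (Fin d → ℝ) := V₁ ∩ (fun x => ((x, b x) : (Fin d → ℝ) × ℂ)) ⁻¹' U with hV₂def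
  have hV₂open : IsOpen V₂ := hmcont.isOpen_inter_preimage hV₁ hUopen
  have hV₂sub : V₂ ⊆ V₁ := Set.inter_subset_left
  have hV₂0 : (0 : Fin d → ℝ) ∈ V₂ := by
    constructor
    · exact hV₁0
    · show ((0:Fin d → ℝ), b 0) ∈ U
      rw [hb0]; exact hp0U
  have hV₂U : ∀ x ∈ V₂, ((x, b x) : (Fin d → ℝ) × ℂ) ∈ U := fun x hx => hx.2
  set b1 := fderiv ℝ b 0 with hb1def
  set B2 := fderiv ℝ (fderiv ℝ b) 0 with hB2def
  have hB2d : HasFDerivAt (fderiv ℝ b) B2 0 := (hbV2 0 hV₁0).hasFDerivAt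
  have hmder : ∀ x ∈ V₂, HasFDerivAt (fun y => ((y, b y) : (Fin d → ℝ) × ℂ))
      ((ContinuousLinearMap.id ℝ (Fin d → ℝ)).prod (fderiv ℝ b x)) x := fun x hx =>
    (hasFDerivAt_id x).prodMk ((hbV x (hV₂sub hx)).hasFDerivAt)
  have heq1 : ∀ x ∈ V₂, ∀ v, fderiv ℝ g ((x, b x)) ((v, fderiv ℝ b x v)) = 0 := by
    intro x hx v
    have hψ : HasFDerivAt (fun y => g (y, b y))
        ((fderiv ℝ g ((x, b x))).comp
          ((ContinuousLinearMap.id ℝ (Fin d → ℝ)).prod (fderiv ℝ b x))) x :=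
      ((hgd _ (hV₂U x hx)).hasFDerivAt).comp x (hmder x hx)
    have hψ0 : HasFDerivAt (fun y => g (y, b y)) (0 : (Fin d → ℝ) →L[ℝ] ℂ) x := by
      have hev : (fun y => g (y, b y)) =ᶠ[𝓝 x] (fun _ => (0:ℂ)) := by
        filter_upwards [hV₂open.mem_nhds hx] with y hy using hgb y (hV₂sub hy)
      exact (hasFDerivAt_const (0:ℂ) x).congr_of_eventuallyEq hev
    have h0 := hψ.unique hψ0
    have h1 := congrArg (fun f : (Fin d → ℝ) →L[ℝ] ℂ => f v) h0
    simpa using h1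
  -- first derivative of b
  have hb1eq : ∀ v, b1 v = L ((v, 0)) := by
    intro v
    have h1 := heq1 0 hV₂0 v
    rw [hb0] at h1
    have hsplit : ((v, b1 v) : (Fin d → ℝ) × ℂ)
        = (v, 0) + (((0:Fin d → ℝ), b1 v) : (Fin d → ℝ) × ℂ) := by simp
    rw [hsplit, L.map_add] at h1
    rw [hlin _ hp0U (b1 v), hL01] at h1
    linear_combination -h1
  -- second derivative of b
  have hAd : HasFDerivAt (fun x => fderiv ℝ g ((x, b x)))
      (D2.comp ((ContinuousLinearMap.id ℝ (Fin d → ℝ)).prod b1)) 0 := by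
    have hD2d' : HasFDerivAt (fderiv ℝ g) D2 (((0:Fin d → ℝ), b 0)) := by
      rw [hb0]; exact hD2d
    exact hD2d'.comp 0 (hmder 0 hV₂0)
  have hsecond : ∀ v w, B2 w v
      = D2 ((w, b1 w)) ((v, 0)) + (b1 v) * D2 ((w, b1 w)) (((0:Fin d → ℝ), 1)) := by
    intro v w
    have hu1 := hAd.clm_apply (hasFDerivAt_const (((v, (0:ℂ))) : (Fin d → ℝ) × ℂ)
      (0 : Fin d → ℝ))
    have hu2 := hB2d.clm_apply (hasFDerivAt_const v (0 : Fin d → ℝ))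
    have hu3 := hAd.clm_apply (hasFDerivAt_const ((((0:Fin d → ℝ), (1:ℂ))) : (Fin d → ℝ) × ℂ)
      (0 : Fin d → ℝ))
    have hsum := hu1.add (hu2.mul hu3)
    have hzero : (fun x => fderiv ℝ g ((x, b x)) ((v, (0:ℂ)))
        + (fderiv ℝ b x v) * fderiv ℝ g ((x, b x)) (((0:Fin d → ℝ), (1:ℂ))))
        =ᶠ[𝓝 (0:Fin d → ℝ)] (fun _ => (0:ℂ)) := by
      filter_upwards [hV₂open.mem_nhds hV₂0] with x hx
      have h1 := heq1 x hx v
      have hsplit : ((v, fderiv ℝ b x v) : (Fin d → ℝ) × ℂ)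
          = (v, 0) + (((0:Fin d → ℝ), fderiv ℝ b x v) : (Fin d → ℝ) × ℂ) := by simp
      rw [hsplit, (fderiv ℝ g ((x, b x))).map_add] at h1
      rw [hlin _ (hV₂U x hx) (fderiv ℝ b x v)] at h1
      linear_combination h1
    have hzder : HasFDerivAt (fun x => fderiv ℝ g ((x, b x)) ((v, (0:ℂ)))
        + (fderiv ℝ b x v) * fderiv ℝ g ((x, b x)) (((0:Fin d → ℝ), (1:ℂ))))
        (0 : (Fin d → ℝ) →L[ℝ] ℂ) 0 :=
      (hasFDerivAt_const (0:ℂ) 0).congr_of_eventuallyEq hzero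
    have huniq := hsum.unique hzder
    have happ := congrArg (fun f : (Fin d → ℝ) →L[ℝ] ℂ => f w) huniq
    simp only [ContinuousLinearMap.add_apply, ContinuousLinearMap.coe_comp',
      Function.comp_apply, ContinuousLinearMap.flip_apply, ContinuousLinearMap.comp_apply,
      ContinuousLinearMap.zero_apply, ContinuousLinearMap.coe_smul', Pi.smul_apply,
      ContinuousLinearMap.prod_apply, ContinuousLinearMap.coe_id', id_eq, smul_eq_mul,
      ContinuousLinearMap.zero_comp, ContinuousLinearMap.comp_zero, zero_add, add_zero,
      ContinuousLinearMap.smul_apply] at happ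
    rw [hb0] at happ
    rw [hL01] at happ
    linear_combination -happ
  -- final assembly
  have hfirst : ∀ j, b1 (Pi.single j 1) = -(Complex.I * μ j) := by
    intro j
    rw [hb1eq, hμ j]
    linear_combination (L ((Pi.single j 1, 0))) * Complex.I_mul_I
  have hsecond' : ∀ j k, B2 (Pi.single j 1) (Pi.single k 1)
      = D2 ((Pi.single j 1, 0)) ((Pi.single k 1, 0))
        - Complex.I * (μ j * D2 ((Pi.single k 1, 0)) (((0:Fin d → ℝ), 1))
          + μ k * D2 ((Pi.single j 1, 0)) (((0:Fin d → ℝ), 1))) := by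
    intro j k
    have h1 := hsecond (Pi.single k 1) (Pi.single j 1)
    rw [hfirst j, hfirst k] at h1
    have hs : ((Pi.single j 1, -(Complex.I * μ j)) : (Fin d → ℝ) × ℂ)
        = (Pi.single j 1, 0) + (((0:Fin d → ℝ), -(Complex.I * μ j)) : (Fin d → ℝ) × ℂ) := by
      simp
    rw [hs, D2.map_add, ContinuousLinearMap.add_apply, ContinuousLinearMap.add_apply] at h1
    rw [hDsym (((0:Fin d → ℝ), -(Complex.I * μ j))) ((Pi.single k 1, 0))] at h1
    rw [hDsym (((0:Fin d → ℝ), -(Complex.I * μ j))) ((((0:Fin d → ℝ), 1)))] at h1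
    rw [hD2lin ((Pi.single k 1, 0)) (-(Complex.I * μ j))] at h1
    rw [hD2lin ((((0:Fin d → ℝ), 1))) (-(Complex.I * μ j))] at h1
    rw [hD211] at h1
    rw [h1]; ring
  have htay := taylor2_aux hV₂open hV₂0 (hb_diff.mono hV₂sub) (hb_diff2.mono hV₂sub)
  rw [hb0] at htay
  exact ⟨hfirst, hsecond', htay⟩

theorem main_analytic {E : Type*} [NormedAddCommGroup E] [NormedSpace ℝ E]
    (b : E → ℂ) (b' : E →L[ℝ] ℂ) (B2 : E →L[ℝ] E →L[ℝ] ℂ) (ω : E) (M Q : ℂ)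
    (hT : (fun h => b h - 1 - b' h - (1/2 : ℝ) • B2 h h) =o[𝓝 0] fun h => ‖h‖ ^ 2)
    (hbω : b' ω = -(Complex.I * M)) (hQ : B2 ω ω = Q) :
    Tendsto (fun n : ℕ => (n:ℂ) *
        (b ((Real.sqrt n)⁻¹ • ω) * Complex.exp (Complex.I * M / (Real.sqrt n : ℝ)) - 1))
      atTop (𝓝 ((1/2) * (Q + M^2))) := by
  classical
  set t : ℕ → E := fun n => (Real.sqrt n)⁻¹ • ω with ht
  set w : ℕ → ℂ := fun n => -(Complex.I * M) / ((Real.sqrt n : ℝ) : ℂ) with hw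
  have hsq : Tendsto (fun n : ℕ => Real.sqrt n) atTop atTop := by
    apply tendsto_atTop_atTop.mpr
    intro C
    refine ⟨⌈C⌉₊^2, fun n hn => ?_⟩
    have h1 : ((⌈C⌉₊:ℝ))^2 ≤ (n:ℝ) := by exact_mod_cast hn
    have h2 : ((⌈C⌉₊:ℝ)) ≤ Real.sqrt n := by
      rw [show ((⌈C⌉₊:ℝ)) = Real.sqrt (((⌈C⌉₊:ℝ))^2) by rw [Real.sqrt_sq (Nat.cast_nonneg _)]]
      exact Real.sqrt_le_sqrt h1
    exact le_trans (Nat.le_ceil C) h2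
  have hrn : Tendsto (fun n : ℕ => (Real.sqrt n)⁻¹) atTop (𝓝 0) :=
    hsq.inv_tendsto_atTop
  have htn : Tendsto t atTop (𝓝 0) := by
    have := hrn.smul_const ω
    simpa using this
  have hwn : Tendsto w atTop (𝓝 0) := by
    have hc : Tendsto (fun n : ℕ => (((Real.sqrt n)⁻¹ : ℝ) : ℂ)) atTop (𝓝 0) := by
      have h0 := (Complex.continuous_ofReal.tendsto 0).comp hrn
      rw [Complex.ofReal_zero] at h0
      exact h0.congr fun n => rfl
    have h2 := hc.const_mul (-(Complex.I * M))
    rw [mul_zero] at h2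
    apply h2.congr
    intro n
    show -(Complex.I * M) * (((Real.sqrt n)⁻¹ : ℝ) : ℂ) = -(Complex.I * M) / ((Real.sqrt n : ℝ) : ℂ)
    push_cast
    ring
  -- norm of w
  have hwnorm : ∀ n : ℕ, ‖w n‖ = ‖M‖ / Real.sqrt n := by
    intro n
    rw [hw]
    simp only [norm_div, norm_neg, norm_mul, Complex.norm_I, one_mul, Complex.norm_real,
      Real.norm_eq_abs, _root_.abs_of_nonneg (Real.sqrt_nonneg _)]
  -- the remainder of b
  have hRlim : Tendsto (fun n : ℕ => (n:ℂ) *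
      (b (t n) - 1 - b' (t n) - (1/2:ℝ) • B2 (t n) (t n))) atTop (𝓝 0) := by
    rw [NormedAddCommGroup.tendsto_nhds_zero]
    intro ε hε
    have hε' : 0 < ε / (‖ω‖^2 + 1) := by positivity
    have hev := htn.eventually (isLittleO_iff.mp hT hε')
    filter_upwards [hev, eventually_ge_atTop 1] with n hn h1n
    have hn0 : (0:ℝ) < n := by exact_mod_cast h1n
    have htnn : ‖t n‖^2 = ‖ω‖^2 / n := by
      have h1 : ‖t n‖ = (Real.sqrt n)⁻¹ * ‖ω‖ := by
        show ‖(Real.sqrt n)⁻¹ • ω‖ = _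
        rw [norm_smul, norm_inv, Real.norm_eq_abs, _root_.abs_of_nonneg (Real.sqrt_nonneg _)]
      have h2 : ((Real.sqrt n)⁻¹)^2 = ((n:ℝ))⁻¹ := by
        rw [← Real.sqrt_inv, Real.sq_sqrt (by positivity)]
      rw [h1, mul_pow, h2, inv_mul_eq_div]
    have hnR : ‖(n:ℂ) * (b (t n) - 1 - b' (t n) - (1/2:ℝ) • B2 (t n) (t n))‖
        = n * ‖b (t n) - 1 - b' (t n) - (1/2:ℝ) • B2 (t n) (t n)‖ := by
      rw [norm_mul, Complex.norm_natCast]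
    rw [hnR]
    have hb1 : ‖b (t n) - 1 - b' (t n) - (1/2:ℝ) • B2 (t n) (t n)‖
        ≤ ε / (‖ω‖^2 + 1) * ‖(‖t n‖^2 : ℝ)‖ := hn
    rw [Real.norm_eq_abs, _root_.abs_of_nonneg (by positivity : (0:ℝ) ≤ ‖t n‖^2), htnn] at hb1
    calc (n:ℝ) * ‖b (t n) - 1 - b' (t n) - (1/2:ℝ) • B2 (t n) (t n)‖
        ≤ n * (ε / (‖ω‖^2 + 1) * (‖ω‖^2 / n)) := by
          exact mul_le_mul_of_nonneg_left hb1 (le_of_lt hn0)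
      _ = ε * (‖ω‖^2 / (‖ω‖^2 + 1)) := by field_simp
      _ < ε * 1 := by
          apply mul_lt_mul_of_pos_left _ hε
          rw [div_lt_one (by positivity)]
          linarith
      _ = ε := mul_one ε
  -- the remainder of exp
  have hElim : Tendsto (fun n : ℕ => (n:ℂ) *
      (Complex.exp (w n) - 1 - w n - (w n)^2 / 2)) atTop (𝓝 0) := by
    have hbd : ∀ᶠ n : ℕ in atTop, ‖(n:ℂ) * (Complex.exp (w n) - 1 - w n - (w n)^2 / 2)‖
        ≤ ‖M‖^3 * (Real.sqrt n)⁻¹ := by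
      filter_upwards [hsq.eventually_ge_atTop (max 1 (‖M‖ + 1)), eventually_ge_atTop 1]
        with n hn h1n
      have hs1 : (1:ℝ) ≤ Real.sqrt n := le_trans (le_max_left _ _) hn
      have hsM : ‖M‖ + 1 ≤ Real.sqrt n := le_trans (le_max_right _ _) hn
      have hspos : (0:ℝ) < Real.sqrt n := lt_of_lt_of_le one_pos hs1
      have hw1 : ‖w n‖ ≤ 1 := by
        rw [hwnorm n, div_le_one hspos]
        linarith
      have hsum3 : (∑ m ∈ Finset.range 3, (w n)^m / (m.factorial : ℂ))
          = 1 + w n + (w n)^2 / 2 := by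
        rw [Finset.sum_range_succ, Finset.sum_range_succ, Finset.sum_range_one]
        norm_num [Nat.factorial]
      have hexpb := Complex.exp_bound (x := w n) (by exact hw1) (n := 3)
        (by norm_num)
      rw [hsum3] at hexpb
      have hE : ‖Complex.exp (w n) - 1 - w n - (w n)^2/2‖ ≤ ‖w n‖^3 := by
        have : Complex.exp (w n) - (1 + w n + (w n)^2/2)
            = Complex.exp (w n) - 1 - w n - (w n)^2/2 := by ring
        rw [this] at hexpb
        calc ‖Complex.exp (w n) - 1 - w n - (w n)^2/2‖
            ≤ ‖w n‖^3 * ((3:ℕ).succ * ((3:ℕ).factorial * (3:ℕ) : ℝ)⁻¹) := hexpb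
          _ ≤ ‖w n‖^3 * 1 := by
              apply mul_le_mul_of_nonneg_left _ (by positivity)
              norm_num [Nat.factorial]
          _ = ‖w n‖^3 := mul_one _
      have hn0 : (0:ℝ) < n := by exact_mod_cast h1n
      rw [norm_mul, Complex.norm_natCast]
      calc (n:ℝ) * ‖Complex.exp (w n) - 1 - w n - (w n)^2/2‖
          ≤ n * ‖w n‖^3 := mul_le_mul_of_nonneg_left hE (le_of_lt hn0)
        _ = n * (‖M‖^3 / (Real.sqrt n)^3) := by rw [hwnorm n, div_pow]
        _ = ‖M‖^3 * (Real.sqrt n)⁻¹ := by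
            have h3 : (Real.sqrt n)^3 = n * Real.sqrt n := by
              rw [pow_succ, pow_two, Real.mul_self_sqrt (le_of_lt hn0)]
            rw [h3]
            field_simp
    have hg : Tendsto (fun n : ℕ => ‖M‖^3 * (Real.sqrt n)⁻¹) atTop (𝓝 0) := by
      have := hrn.const_mul (‖M‖^3)
      simpa using this
    exact squeeze_zero_norm' hbd hg
  -- identity and conclusion
  have hkey : Tendsto (fun n : ℕ => (n:ℂ) * (b (t n) - Complex.exp (w n))) atTop
      (𝓝 ((1/2) * (Q + M^2))) := by
    have hcomb := (hRlim.sub hElim).add (tendsto_const_nhds (x := (1/2) * (Q + M^2)))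
    rw [sub_self, zero_add] at hcomb
    apply hcomb.congr'
    filter_upwards [eventually_ge_atTop 1] with n h1n
    have hn0 : (0:ℝ) < n := by exact_mod_cast h1n
    have hnc : ((n:ℂ)) ≠ 0 := Nat.cast_ne_zero.mpr (by omega)
    have hrr : ((Real.sqrt n : ℝ) : ℂ) * ((Real.sqrt n : ℝ) : ℂ) = (n:ℂ) := by
      rw [← Complex.ofReal_mul, Real.mul_self_sqrt (le_of_lt hn0)]
      norm_num
    have hrc : ((Real.sqrt n : ℝ) : ℂ) ≠ 0 := by
      intro hcon
      rw [hcon, mul_zero] at hrr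
      exact hnc hrr.symm
    -- b' (t n) = w n
    have f1 : (b' (t n) : ℂ) = w n := by
      show b' ((Real.sqrt n)⁻¹ • ω) = -(Complex.I * M) / ((Real.sqrt n : ℝ) : ℂ)
      rw [ContinuousLinearMap.map_smul, hbω, Complex.real_smul, Complex.ofReal_inv]
      field_simp
    -- (1/2:ℝ) • B2 (t n) (t n) = Q / (2 * n)
    have f2 : ((1/2:ℝ) • B2 (t n) (t n) : ℂ) = Q / (2 * n) := by
      have e1 : B2 (t n) (t n) = (Real.sqrt n)⁻¹ • (Real.sqrt n)⁻¹ • Q := by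
        show B2 ((Real.sqrt n)⁻¹ • ω) ((Real.sqrt n)⁻¹ • ω) = _
        rw [B2.map_smul, ContinuousLinearMap.smul_apply, (B2 ω).map_smul, hQ]
      rw [e1, Complex.real_smul, Complex.real_smul, Complex.real_smul, Complex.ofReal_inv]
      have hx : ((Real.sqrt n : ℝ) : ℂ)⁻¹ * (((Real.sqrt n : ℝ) : ℂ)⁻¹ * Q)
          = ((n:ℂ))⁻¹ * Q := by
        rw [← mul_assoc, ← mul_inv, hrr]
      rw [hx, show ((1/2 : ℝ) : ℂ) = 1/2 by norm_num]
      field_simp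
    -- (w n)^2 = - M^2 / n
    have f3 : (w n)^2 = - M^2 / (n:ℂ) := by
      show (-(Complex.I * M) / ((Real.sqrt n : ℝ) : ℂ))^2 = - M^2 / (n:ℂ)
      rw [div_pow, show (((Real.sqrt n : ℝ) : ℂ))^2 = (n:ℂ) by rw [sq]; exact hrr,
        neg_sq, mul_pow, Complex.I_sq]
      ring
    -- the identity
    show (n:ℂ) * (b (t n) - 1 - b' (t n) - (1/2:ℝ) • B2 (t n) (t n))
        - (n:ℂ) * (Complex.exp (w n) - 1 - w n - (w n)^2/2) + (1/2) * (Q + M^2)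
        = (n:ℂ) * (b (t n) - Complex.exp (w n))
    rw [f1, f2, f3]
    field_simp
    ring
  -- put things together
  have hexpw : Tendsto (fun n : ℕ => Complex.exp (-(w n))) atTop (𝓝 1) := by
    have h1 : Tendsto (fun n : ℕ => -(w n)) atTop (𝓝 0) := by
      have := hwn.neg
      rwa [neg_zero] at this
    have h2 := (Complex.continuous_exp.tendsto 0).comp h1
    rw [Complex.exp_zero] at h2
    exact h2.congr fun n => rfl
  have hfin := hkey.mul hexpw
  rw [mul_one] at hfin
  apply hfin.congr
  intro n
  have hee : Complex.exp (w n) * Complex.exp (-(w n)) = 1 := by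
    rw [← Complex.exp_add]
    simp
  have hwneg : Complex.exp (-(w n)) = Complex.exp (Complex.I * M / (Real.sqrt n : ℝ)) := by
    show Complex.exp (-(-(Complex.I * M) / ((Real.sqrt n : ℝ) : ℂ))) = _
    congr 1
    field_simp
  calc (n:ℂ) * (b (t n) - Complex.exp (w n)) * Complex.exp (-(w n))
      = (n:ℂ) * (b (t n) * Complex.exp (-(w n)) - Complex.exp (w n) * Complex.exp (-(w n))) := by
        ring
    _ = (n:ℂ) * (b (t n) * Complex.exp (Complex.I * M / (Real.sqrt n : ℝ)) - 1) := by
        rw [hee, hwneg]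

theorem pow_tendsto_exp {c : ℕ → ℂ} {a : ℂ}
    (h : Tendsto (fun n : ℕ => (n:ℂ) * (c n - 1)) atTop (𝓝 a)) :
    Tendsto (fun n => c n ^ n) atTop (𝓝 (Complex.exp a)) := by
  have hinv : Tendsto (fun n : ℕ => ((n:ℂ))⁻¹) atTop (𝓝 0) := by
    have : Tendsto (fun n : ℕ => ((n:ℝ))⁻¹) atTop (𝓝 0) :=
      tendsto_inv_atTop_nhds_zero_nat
    have h2 := (Complex.continuous_ofReal.tendsto 0).comp this
    simpa [Function.comp_def, Complex.ofReal_inv, Complex.ofReal_natCast] using h2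
  have hc0 : Tendsto (fun n => c n - 1) atTop (𝓝 0) := by
    have hmul := hinv.mul h
    rw [zero_mul] at hmul
    apply hmul.congr'
    filter_upwards [eventually_ge_atTop 1] with n hn
    have hn0 : (n:ℂ) ≠ 0 := Nat.cast_ne_zero.mpr (by omega)
    field_simp
  have hF : Tendsto (fun z : ℂ => if z = 0 then 1 else Complex.log (1+z) / z)
      (𝓝 0) (𝓝 1) := by
    have h1 : HasDerivAt Complex.log 1 1 := by
      simpa using Complex.hasDerivAt_log Complex.one_mem_slitPlane
    rw [hasDerivAt_iff_tendsto_slope] at h1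
    have hmap : Tendsto (fun z : ℂ => 1 + z) (𝓝[≠] 0) (𝓝[≠] 1) := by
      apply tendsto_nhdsWithin_of_tendsto_nhds_of_eventually_within
      · have hcont : Continuous (fun z : ℂ => 1 + z) := by continuity
        have := hcont.tendsto (0:ℂ)
        simpa using this.mono_left nhdsWithin_le_nhds
      · filter_upwards [self_mem_nhdsWithin] with z hz
        simp only [Set.mem_compl_iff, Set.mem_singleton_iff] at hz ⊢
        intro hcon
        apply hz
        have : (1:ℂ) + z = 1 + 0 := by simpa using hcon
        exact add_left_cancel this
    have hslope : Tendsto (fun z : ℂ => Complex.log (1+z) / z) (𝓝[≠] 0) (𝓝 1) := by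
      have := h1.comp hmap
      apply this.congr'
      filter_upwards [self_mem_nhdsWithin] with z hz
      simp only [Set.mem_compl_iff, Set.mem_singleton_iff] at hz
      simp only [Function.comp_apply, slope, Complex.log_one, vsub_eq_sub, smul_eq_mul]
      have hzz : (1:ℂ) + z - 1 = z := by ring
      rw [hzz, sub_zero, inv_mul_eq_div]
    rw [← nhdsNE_sup_pure (0:ℂ), tendsto_sup]
    constructor
    · apply hslope.congr'
      filter_upwards [self_mem_nhdsWithin] with z hz
      simp only [Set.mem_compl_iff, Set.mem_singleton_iff] at hz
      rw [if_neg hz]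
    · have hp := tendsto_pure_nhds
        (fun z : ℂ => if z = 0 then (1:ℂ) else Complex.log (1+z) / z) 0
      simpa using hp
  have hq : Tendsto (fun n => if c n - 1 = 0 then (1:ℂ)
      else Complex.log (1 + (c n - 1)) / (c n - 1)) atTop (𝓝 1) := hF.comp hc0
  have key : ∀ n : ℕ, (n:ℂ) * Complex.log (c n)
      = ((n:ℂ) * (c n - 1)) * (if c n - 1 = 0 then (1:ℂ)
        else Complex.log (1 + (c n - 1)) / (c n - 1)) := by
    intro n
    by_cases hc : c n - 1 = 0
    · have hcc : c n = 1 := by linear_combination hc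
      rw [hc, hcc]
      simp
    · rw [if_neg hc]
      have h1 : (1:ℂ) + (c n - 1) = c n := by ring
      rw [h1]
      field_simp
  have hlog : Tendsto (fun n : ℕ => (n:ℂ) * Complex.log (c n)) atTop (𝓝 a) := by
    have := h.mul hq
    rw [mul_one] at this
    exact this.congr (fun n => (key n).symm)
  have hexp := (Complex.continuous_exp.tendsto a).comp hlog
  apply hexp.congr'
  have hc1 : Tendsto c atTop (𝓝 1) := by
    have := hc0.add (tendsto_const_nhds (x := (1:ℂ)))
    rw [zero_add] at this
    exact this.congr (fun n => by ring)
  have hne : ∀ᶠ n in atTop, c n ≠ 0 := hc1.eventually_ne one_ne_zero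
  filter_upwards [hne] with n hcn
  rw [Function.comp_apply, Complex.exp_nat_mul, Complex.exp_log hcn]

end Aux

/-- Under the standing hypotheses, with `b` the implicit function at `(0,1)`, for every
fixed `ω ∈ ℝ^d`, `lim (b(ω/√n))ⁿ exp(i⟨μ,ω⟩√n) = exp(½⟨ω, Σω⟩)`. -/
theorem stmt11 {d : ℕ} (hd : 0 < d)
    {Ω : Type*} [MeasureSpace Ω] [IsProbabilityMeasure (ℙ : Measure Ω)]
    (Y : ℕ → Ω → Fin d → ℝ) (hYmeas : ∀ n, Measurable (Y n))
    -- `U` is an open neighborhood of `{0} × {z : |z| ≤ 1}` in `ℝ^d × ℂ`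
    (U : Set ((Fin d → ℝ) × ℂ)) (hUopen : IsOpen U)
    (hUnhd : ∀ z : ℂ, ‖z‖ ≤ 1 → ((0 : Fin d → ℝ), z) ∈ U)
    (g : (Fin d → ℝ) × ℂ → ℂ)
    -- (i) `g(x, z)` is holomorphic in `z` for each fixed `x`
    (hg_holo : ∀ x : Fin d → ℝ, DifferentiableOn ℂ (fun z => g (x, z)) {z | (x, z) ∈ U})
    -- (ii) `g` is twice differentiable on `U`
    (hg_diff : DifferentiableOn ℝ g U)
    (hg_diff2 : DifferentiableOn ℝ (fderiv ℝ g) U)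
    -- (iii) `∑ φ_{Y_n}(x) z^n = 1/g(x,z)` for `(x,z) ∈ U`, `|z| < 1`
    -- (in particular `g` is nonvanishing there)
    (hg_ne : ∀ x z, (x, z) ∈ U → ‖z‖ < 1 → g (x, z) ≠ 0)
    (hg_sum : ∀ x z, (x, z) ∈ U → ‖z‖ < 1 →
      HasSum (fun n : ℕ => charFn (Y n) x * z ^ n) (1 / g (x, z)))
    -- `b` is the twice differentiable function near `0` with `b(0) = 1` and `g(x, b(x)) = 0`,
    -- given by the implicit function theorem applied to `g` at `(0, 1)`
    (V₁ : Set (Fin d → ℝ)) (hV₁ : IsOpen V₁) (hV₁0 : (0 : Fin d → ℝ) ∈ V₁)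
    (b : (Fin d → ℝ) → ℂ)
    (hb_diff : DifferentiableOn ℝ b V₁) (hb_diff2 : DifferentiableOn ℝ (fderiv ℝ b) V₁)
    (hb0 : b 0 = 1) (hgb : ∀ x ∈ V₁, g (x, b x) = 0)
    -- `μ_j = i g_{x_j}(0,1)`
    (μ : Fin d → ℂ)
    (hμ : ∀ j, μ j = Complex.I * fderiv ℝ g (0, 1) (Pi.single j 1, 0))
    -- `Σ_{j,k} = g_{x_j x_k}(0,1) - i(μ_j g_{x_k z}(0,1) + μ_k g_{x_j z}(0,1)) + μ_j μ_k`
    (Sig : Fin d → Fin d → ℂ)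
    (hSig : ∀ j k, Sig j k =
      pd2 g (0, 1) (Pi.single j 1, 0) (Pi.single k 1, 0)
        - Complex.I * (μ j * pd2 g (0, 1) (Pi.single k 1, 0) (0, 1)
          + μ k * pd2 g (0, 1) (Pi.single j 1, 0) (0, 1))
        + μ j * μ k) :
    ∀ ω : Fin d → ℝ,
      Tendsto (fun n : ℕ =>
          (b fun j => ω j / Real.sqrt n) ^ n
            * Complex.exp (Complex.I * (∑ j, μ j * ω j) * Real.sqrt n))
        atTop (𝓝 (Complex.exp ((1/2) * ∑ j, ∑ k, Sig j k * ω j * ω k))) := by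
  intro ω
  classical
  -- characteristic function at 0 is 1
  have hchar1 : ∀ n : ℕ, charFn (Y n) 0 = 1 := by
    intro n
    unfold charFn
    simp only [Pi.zero_apply, mul_zero, Finset.sum_const_zero, Complex.ofReal_zero,
      Complex.exp_zero]
    simp [measure_univ]
  -- g(0,z) = 1 - z on the open unit disc
  have hg0 : ∀ z : ℂ, ‖z‖ < 1 → g (0, z) = 1 - z := by
    intro z hz
    have h1 := hg_sum 0 z (hUnhd z (le_of_lt hz)) hz
    simp only [hchar1, one_mul] at h1
    have h2 : HasSum (fun n : ℕ => z ^ n) ((1 - z)⁻¹) :=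
      hasSum_geometric_of_norm_lt_one hz
    have h3 : 1 / g (0, z) = (1 - z)⁻¹ := h1.unique h2
    have hz1 : (1:ℂ) - z ≠ 0 := by
      intro hcon
      have h4 : z = 1 := by linear_combination -hcon
      rw [h4] at hz
      norm_num at hz
    have hgne := hg_ne 0 z (hUnhd z (le_of_lt hz)) hz
    field_simp at h3
    linear_combination -h3
  obtain ⟨hfirst, hsecond', htay⟩ := deriv_facts U hUopen hUnhd g hg_holo hg_diff hg_diff2
    hg0 V₁ hV₁ hV₁0 b hb_diff hb_diff2 hb0 hgb μ hμ
  set M : ℂ := ∑ j, μ j * (ω j : ℂ) with hM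
  set b1 := fderiv ℝ b 0 with hb1def
  set B2 := fderiv ℝ (fderiv ℝ b) 0 with hB2def
  have hωsum : ω = ∑ j, ω j • (Pi.single j 1 : Fin d → ℝ) := by
    funext k
    rw [Finset.sum_apply]
    simp [Pi.single_apply]
  have hrow : ∀ (f : (Fin d → ℝ) →L[ℝ] ℂ), f ω = ∑ k, (ω k : ℂ) * f (Pi.single k 1) := by
    intro f
    conv_lhs => rw [hωsum]
    rw [map_sum]
    apply Finset.sum_congr rfl
    intro k _
    rw [_root_.map_smul, Complex.real_smul]
  -- b1 ω = -(I * M)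
  have hb1ω : b1 ω = -(Complex.I * M) := by
    rw [hrow b1]
    have h1 : ∀ j : Fin d, (ω j : ℂ) * b1 (Pi.single j 1)
        = -(Complex.I * (μ j * (ω j : ℂ))) := by
      intro j
      rw [hfirst j]
      ring
    rw [Finset.sum_congr rfl (fun j _ => h1 j), hM]
    rw [Finset.mul_sum, ← Finset.sum_neg_distrib]
  -- Sig in terms of B2
  have hSig' : ∀ j k, B2 (Pi.single j 1) (Pi.single k 1) = Sig j k - μ j * μ k := by
    intro j k
    rw [hSig j k]
    simp only [pd2]
    linear_combination hsecond' j k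
  -- B2 ω ω
  have hB2ω : B2 ω ω = ∑ j, ∑ k, (ω j : ℂ) * ((ω k : ℂ)
      * B2 (Pi.single j 1) (Pi.single k 1)) := by
    have h1 : ∀ y, B2 ω y = ∑ j, (ω j:ℂ) * (B2 (Pi.single j 1) y) := by
      intro y
      conv_lhs => rw [hωsum]
      rw [map_sum, ContinuousLinearMap.sum_apply]
      apply Finset.sum_congr rfl
      intro j _
      rw [_root_.map_smul, ContinuousLinearMap.smul_apply, Complex.real_smul]
    rw [h1 ω]
    apply Finset.sum_congr rfl
    intro j _
    rw [hrow (B2 (Pi.single j 1)), Finset.mul_sum]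
  have hQval : B2 ω ω = (∑ j, ∑ k, Sig j k * (ω j:ℂ) * (ω k:ℂ)) - M^2 := by
    rw [hB2ω]
    have h1 : ∀ j k, (ω j:ℂ) * ((ω k:ℂ) * B2 (Pi.single j 1) (Pi.single k 1))
        = Sig j k * (ω j:ℂ) * (ω k:ℂ) - (μ j * (ω j:ℂ)) * (μ k * (ω k:ℂ)) := by
      intro j k
      rw [hSig' j k]
      ring
    rw [Finset.sum_congr rfl (fun j _ =>
      Finset.sum_congr rfl (fun k _ => h1 j k))]
    have hMM : (∑ j, ∑ k, (μ j * (ω j:ℂ)) * (μ k * (ω k:ℂ))) = M^2 := by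
      rw [hM, sq, Finset.sum_mul_sum]
    rw [← hMM]
    rw [← Finset.sum_sub_distrib]
    apply Finset.sum_congr rfl
    intro j _
    rw [← Finset.sum_sub_distrib]
  -- the main limit
  have hmain := main_analytic b b1 B2 ω M (B2 ω ω) htay hb1ω rfl
  have hpow := pow_tendsto_exp hmain
  -- identify the limit
  have hexp_eq : Complex.exp ((1/2 : ℂ) * ∑ j, ∑ k, Sig j k * (ω j:ℂ) * (ω k:ℂ))
      = Complex.exp ((1/2 : ℂ) * (B2 ω ω + M^2)) := by
    congr 1
    rw [hQval]
    ring
  rw [show ((1:ℂ)/2) * ∑ j, ∑ k, Sig j k * (ω j:ℂ) * (ω k:ℂ)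
      = (1/2 : ℂ) * ∑ j, ∑ k, Sig j k * (ω j:ℂ) * (ω k:ℂ) from rfl, hexp_eq]
  apply hpow.congr'
  filter_upwards [eventually_ge_atTop 1] with n hn
  have hn0 : (0:ℝ) < n := by exact_mod_cast hn
  have hrr : ((Real.sqrt n : ℝ) : ℂ) * ((Real.sqrt n : ℝ) : ℂ) = (n:ℂ) := by
    rw [← Complex.ofReal_mul, Real.mul_self_sqrt (le_of_lt hn0)]
    norm_num
  have hrc : ((Real.sqrt n : ℝ) : ℂ) ≠ 0 := by
    intro hcon
    rw [hcon, mul_zero] at hrr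
    exact_mod_cast (Nat.cast_ne_zero.mpr (by omega : n ≠ 0)) hrr.symm
  have hb_eq : (fun j => ω j / Real.sqrt n) = (Real.sqrt n)⁻¹ • ω := by
    funext j
    rw [Pi.smul_apply, smul_eq_mul, div_eq_inv_mul]
  show (b ((Real.sqrt n)⁻¹ • ω) * Complex.exp (Complex.I * M / (Real.sqrt n : ℝ))) ^ n
      = (b fun j => ω j / Real.sqrt n) ^ n * Complex.exp (Complex.I * M * (Real.sqrt n : ℝ))
  rw [hb_eq, mul_pow, ← Complex.exp_nat_mul]
  congr 2
  rw [show ((n:ℕ):ℂ) = ((Real.sqrt n:ℝ):ℂ) * ((Real.sqrt n:ℝ):ℂ) from hrr.symm]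
  field_simp
end

section
/- Let F_{m,n} be the power series coefficients of F(y,z) = (y/2)(−1 − yz + √(1 − 4z + 2yz + y²z²)) at (0,0). Then F_{m,n} = 0 whenever m > n + 1. -/
open MeasureTheory ProbabilityTheory Complex Filter Topology Metric

/-- The radicand `1 - 4z + 2yz + y²z²`, as a formal power series in the two
variables `y = X 0` and `z = X 1`. -/
noncomputable def radicand : MvPowerSeries (Fin 2) ℂ :=
  1 - 4 * MvPowerSeries.X 1 + 2 * MvPowerSeries.X 0 * MvPowerSeries.X 1
    + MvPowerSeries.X 0 ^ 2 * MvPowerSeries.X 1 ^ 2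

/-- Given `S` (the branch of `√(1 - 4z + 2yz + y²z²)` with constant term `1`, as a
formal power series), `Fcoeff S m n` is the coefficient `F_{m,n} = [yᵐzⁿ] F(y,z)` of the
power series expansion of `F(y,z) = (y/2)(-1 - yz + √(1 - 4z + 2yz + y²z²))` at `(0,0)`. -/
noncomputable def Fcoeff (S : MvPowerSeries (Fin 2) ℂ) (m n : ℕ) : ℂ :=
  MvPowerSeries.coeff (Finsupp.single 0 m + Finsupp.single 1 n)
    (MvPowerSeries.C (σ := Fin 2) (R := ℂ) (1/2) * MvPowerSeries.X 0 *
      (-1 - MvPowerSeries.X 0 * MvPowerSeries.X 1 + S))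

namespace Stmt15Aux

open MvPowerSeries

lemma pair_apply0 (m n : ℕ) :
    ((Finsupp.single (0 : Fin 2) m + Finsupp.single 1 n : Fin 2 →₀ ℕ)) 0 = m := by
  simp [Finsupp.single_apply]

lemma pair_apply1 (m n : ℕ) :
    ((Finsupp.single (0 : Fin 2) m + Finsupp.single 1 n : Fin 2 →₀ ℕ)) 1 = n := by
  simp [Finsupp.single_apply]

lemma pair_inj {m n m' n' : ℕ}
    (h : Finsupp.single (0 : Fin 2) m + Finsupp.single 1 n
       = Finsupp.single (0 : Fin 2) m' + Finsupp.single 1 n') : m = m' ∧ n = n' := by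
  constructor
  · have := congrArg (fun f => f 0) h; simpa [pair_apply0] using this
  · have := congrArg (fun f => f 1) h; simpa [pair_apply1] using this

lemma finsupp_eq (v : Fin 2 →₀ ℕ) :
    v = Finsupp.single 0 (v 0) + Finsupp.single 1 (v 1) := by
  ext i
  fin_cases i <;> simp [Finsupp.single_apply]

lemma coeff_radicand (m n : ℕ) (h : n < m) :
    MvPowerSeries.coeff (Finsupp.single 0 m + Finsupp.single 1 n) radicand = 0 := by
  classical
  unfold radicand
  have h4 : (4 : MvPowerSeries (Fin 2) ℂ) * X 1
      = monomial (Finsupp.single 1 1) 4 := by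
    rw [show (4 : MvPowerSeries (Fin 2) ℂ) = monomial 0 (4:ℂ) from by
        rw [monomial_zero_eq_C_apply]; exact (map_ofNat (C (σ := Fin 2) (R := ℂ)) 4).symm,
      X_def, monomial_mul_monomial, zero_add, mul_one]
  have h2 : (2 : MvPowerSeries (Fin 2) ℂ) * X 0 * X 1
      = monomial (Finsupp.single 0 1 + Finsupp.single 1 1) 2 := by
    rw [show (2 : MvPowerSeries (Fin 2) ℂ) = monomial 0 (2:ℂ) from by
        rw [monomial_zero_eq_C_apply]; exact (map_ofNat (C (σ := Fin 2) (R := ℂ)) 2).symm,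
      X_def, X_def, monomial_mul_monomial, monomial_mul_monomial, zero_add, mul_one, mul_one]
  have h22 : (X 0 ^ 2 * X 1 ^ 2 : MvPowerSeries (Fin 2) ℂ)
      = monomial (Finsupp.single 0 2 + Finsupp.single 1 2) 1 := by
    rw [X_pow_eq, X_pow_eq, monomial_mul_monomial, one_mul]
  rw [h4, h2, h22, map_add, map_add, map_sub, coeff_one, coeff_monomial, coeff_monomial,
    coeff_monomial]
  rw [if_neg, if_neg, if_neg, if_neg]
  · ring
  · intro he
    obtain ⟨h1, h2⟩ := pair_inj he
    omega
  · intro he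
    obtain ⟨h1, h2⟩ := pair_inj he
    omega
  · intro he
    have := congrArg (fun f => f 0) he
    simp [pair_apply0, Finsupp.single_apply] at this
    omega
  · intro he
    have := congrArg (fun f => f 0) he
    simp [pair_apply0] at this
    omega

lemma coeff_S (S : MvPowerSeries (Fin 2) ℂ) (hS_sq : S ^ 2 = radicand)
    (hS_one : MvPowerSeries.constantCoeff S = 1) :
    ∀ k m n : ℕ, m + n = k → n < m →
      MvPowerSeries.coeff (Finsupp.single 0 m + Finsupp.single 1 n) S = 0 := by
  classical
  intro k
  induction k using Nat.strong_induction_on with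
  | _ k IH =>
    intro m n hk h
    set d : Fin 2 →₀ ℕ := Finsupp.single 0 m + Finsupp.single 1 n with hd
    have hd0 : d ≠ 0 := by
      intro hz
      have := congrArg (fun f => f 0) hz
      simp only [hd, pair_apply0, Finsupp.coe_zero, Pi.zero_apply] at this
      omega
    have hrad : MvPowerSeries.coeff d (S * S) = 0 := by
      rw [← sq, hS_sq]; exact coeff_radicand m n h
    rw [MvPowerSeries.coeff_mul] at hrad
    set f : (Fin 2 →₀ ℕ) × (Fin 2 →₀ ℕ) → ℂ :=
      fun p => MvPowerSeries.coeff p.1 S * MvPowerSeries.coeff p.2 S with hf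
    have hmem1 : ((0 : Fin 2 →₀ ℕ), d) ∈ Finset.HasAntidiagonal.antidiagonal d := by
      simp [Finset.HasAntidiagonal.mem_antidiagonal]
    have hmem2 : ((d, (0 : Fin 2 →₀ ℕ))) ∈ (Finset.HasAntidiagonal.antidiagonal d).erase (0, d) := by
      refine Finset.mem_erase.mpr ⟨?_, by simp [Finset.HasAntidiagonal.mem_antidiagonal]⟩
      intro hcontra
      exact hd0 ((congrArg Prod.snd hcontra).symm)
    have hrest : ∑ x ∈ ((Finset.HasAntidiagonal.antidiagonal d).erase (0, d)).erase (d, 0), f x = 0 := by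
      apply Finset.sum_eq_zero
      intro x hx
      have hx2 := Finset.mem_erase.mp hx
      have hx1 := Finset.mem_erase.mp hx2.2
      have hxa : x.1 + x.2 = d := Finset.HasAntidiagonal.mem_antidiagonal.mp hx1.2
      have hm : x.1 0 + x.2 0 = m := by
        have := congrArg (fun g => g 0) hxa
        simpa [hd, pair_apply0] using this
      have hn : x.1 1 + x.2 1 = n := by
        have := congrArg (fun g => g 1) hxa
        simpa [hd, pair_apply1] using this
      have hne1 : ¬(x.1 0 = 0 ∧ x.1 1 = 0) := by
        rintro ⟨hz0, hz1⟩
        apply hx1.1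
        have hx10 : x.1 = 0 := by
          rw [finsupp_eq x.1, hz0, hz1]; simp
        have : x.2 = d := by rw [← hxa, hx10, zero_add]
        exact Prod.ext hx10 this
      have hne2 : ¬(x.2 0 = 0 ∧ x.2 1 = 0) := by
        rintro ⟨hz0, hz1⟩
        apply hx2.1
        have hx20 : x.2 = 0 := by
          rw [finsupp_eq x.2, hz0, hz1]; simp
        have : x.1 = d := by rw [← hxa, hx20, add_zero]
        exact Prod.ext this hx20
      rcases (by omega : x.1 1 < x.1 0 ∨ x.2 1 < x.2 0) with hc | hc
      · have hlt : x.1 0 + x.1 1 < k := by omega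
        have : MvPowerSeries.coeff x.1 S = 0 := by
          rw [finsupp_eq x.1]
          exact IH _ hlt _ _ rfl hc
        simp [hf, this]
      · have hlt : x.2 0 + x.2 1 < k := by omega
        have : MvPowerSeries.coeff x.2 S = 0 := by
          rw [finsupp_eq x.2]
          exact IH _ hlt _ _ rfl hc
        simp [hf, this]
    have hsum : ∑ x ∈ Finset.HasAntidiagonal.antidiagonal d, f x
        = f (0, d) + (f (d, 0) +
            ∑ x ∈ ((Finset.HasAntidiagonal.antidiagonal d).erase (0, d)).erase (d, 0), f x) := by
      rw [Finset.add_sum_erase _ f hmem2, Finset.add_sum_erase _ f hmem1]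
    rw [hsum, hrest, add_zero] at hrad
    have h1 : f (0, d) = MvPowerSeries.coeff d S := by
      simp [hf, MvPowerSeries.coeff_zero_eq_constantCoeff, hS_one]
    have h2 : f (d, 0) = MvPowerSeries.coeff d S := by
      simp [hf, MvPowerSeries.coeff_zero_eq_constantCoeff, hS_one]
    rw [h1, h2] at hrad
    have : (2 : ℂ) * MvPowerSeries.coeff d S = 0 := by ring_nf; linear_combination hrad
    have h2ne : (2 : ℂ) ≠ 0 := two_ne_zero
    exact (mul_eq_zero.mp this).resolve_left h2ne

end Stmt15Aux

/-- `F_{m,n} = 0` whenever `m > n + 1`. -/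
theorem stmt15 -- `S` is the branch of `√(1 - 4z + 2yz + y²z²)` which evaluates to `1` at `(0,0)`
    (S : MvPowerSeries (Fin 2) ℂ) (hS_sq : S ^ 2 = radicand)
    (hS_one : MvPowerSeries.constantCoeff S = 1) :
    ∀ m n : ℕ, n + 1 < m → Fcoeff S m n = 0 := by
  classical
  intro m n hmn
  have hm2 : 2 ≤ m := by omega
  unfold Fcoeff
  open MvPowerSeries in
  have hprod : (C (σ := Fin 2) (R := ℂ) (1/2) * X 0 * (-1 - X 0 * X 1 + S) : MvPowerSeries (Fin 2) ℂ)
      = C (σ := Fin 2) (R := ℂ) (1/2) * (X 0 * S - X 0 - X 0 ^ 2 * X 1) := by ring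
  rw [hprod, MvPowerSeries.coeff_C_mul, map_sub, map_sub]
  set d : Fin 2 →₀ ℕ := Finsupp.single 0 m + Finsupp.single 1 n with hd
  have hXS : MvPowerSeries.coeff d (MvPowerSeries.X 0 * S) = 0 := by
    have hdsplit : d = Finsupp.single (0 : Fin 2) 1
        + (Finsupp.single 0 (m - 1) + Finsupp.single 1 n) := by
      rw [hd, ← add_assoc, ← Finsupp.single_add]
      congr 2
      omega
    rw [hdsplit, MvPowerSeries.X_def, MvPowerSeries.coeff_add_monomial_mul, one_mul]
    exact Stmt15Aux.coeff_S S hS_sq hS_one (m - 1 + n) (m - 1) n rfl (by omega)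
  have hX0 : MvPowerSeries.coeff d (MvPowerSeries.X 0 : MvPowerSeries (Fin 2) ℂ) = 0 := by
    rw [MvPowerSeries.coeff_X, if_neg]
    intro he
    have := congrArg (fun g => g 0) he
    simp only [hd, Stmt15Aux.pair_apply0, Finsupp.single_eq_same] at this
    omega
  have hX21 : MvPowerSeries.coeff d
      (MvPowerSeries.X 0 ^ 2 * MvPowerSeries.X 1 : MvPowerSeries (Fin 2) ℂ) = 0 := by
    have : (MvPowerSeries.X 0 ^ 2 * MvPowerSeries.X 1 : MvPowerSeries (Fin 2) ℂ)
        = MvPowerSeries.monomial (Finsupp.single 0 2 + Finsupp.single 1 1) 1 := by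
      rw [MvPowerSeries.X_pow_eq, MvPowerSeries.X_def,
        MvPowerSeries.monomial_mul_monomial, one_mul]
    rw [this, MvPowerSeries.coeff_monomial, if_neg]
    intro he
    obtain ⟨h1, h2⟩ := Stmt15Aux.pair_inj he
    omega
  rw [hXS, hX0, hX21]
  ring
end
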